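/- arXiv:1809.00568 — 7 statements merged into one kernel-verified Lean document; each statement's English description precedes it below -/
import Mathlib

section
/- Let C be a λ-constacyclic code of length n over F_q with gcd(n,q)=1, let r be the multiplicative order of λ in F_q^*, let m be the multiplicative order of q modulo rn, and let θ be a primitive rn-th root of unity in F_{q^m} satisfying θ^n = λ. If there exist integers h and δ ≥ 2 such that every codeword (c_1,...,c_n) ∈ C satisfies c_1 + c_2 θ^{(1+ri)} + ⋯ + c_n θ^{(1+ri)(n-1)} = 0 for all i = h, h+1, ..., h+δ-2, then the minimum Hamming distance of C is at least δ. (BCH bound for constacyclic codes.) -/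
open Finset

/-- The `k`-Galois dual of a linear code `C ⊆ F_q^n`, where `q = p^e`:
`C^{⊥_k} = {x | ∀ c ∈ C, ∑ i, c i * (x i)^(p^k) = 0}`. -/
def galoisDual (p k : ℕ) [Fact p.Prime] {F : Type*} [Field F] [CharP F p] {n : ℕ}
    (C : Submodule F (Fin n → F)) : Submodule F (Fin n → F) where
  carrier := {x | ∀ c ∈ C, ∑ i, c i * x i ^ p ^ k = 0}
  zero_mem' := fun c _ => by
    simp [zero_pow (pow_pos (Nat.Prime.pos (Fact.out : p.Prime)) k).ne']
  add_mem' := by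
    intro x y hx hy c hc
    have hpow : ∀ i : Fin n, (x + y) i ^ p ^ k = x i ^ p ^ k + y i ^ p ^ k := fun i => by
      simpa using add_pow_char_pow (x i) (y i) p k
    calc ∑ i, c i * (x + y) i ^ p ^ k
        = ∑ i, (c i * x i ^ p ^ k + c i * y i ^ p ^ k) := by
          refine Finset.sum_congr rfl fun i _ => by rw [hpow i, mul_add]
      _ = 0 := by
          rw [Finset.sum_add_distrib, hx c hc, hy c hc, add_zero]
  smul_mem' := by
    intro a x hx c hc
    calc ∑ i, c i * (a • x) i ^ p ^ k
        = a ^ p ^ k * ∑ i, c i * x i ^ p ^ k := by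
          rw [Finset.mul_sum]
          refine Finset.sum_congr rfl fun i _ => by
            simp only [Pi.smul_apply, smul_eq_mul, mul_pow]; ring
      _ = 0 := by rw [hx c hc, mul_zero]

/-- A linear code `C` is a `k`-Galois LCD code if `C ∩ C^{⊥_k} = {0}`. -/
def IsGaloisLCD (p k : ℕ) [Fact p.Prime] {F : Type*} [Field F] [CharP F p] {n : ℕ}
    (C : Submodule F (Fin n → F)) : Prop :=
  C ⊓ galoisDual p k C = ⊥

/-- `C` has minimum Hamming distance `d`. -/
def IsMinDist {F : Type*} [Field F] [DecidableEq F] {n : ℕ}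
    (C : Submodule F (Fin n → F)) (d : ℕ) : Prop :=
  (∃ x ∈ C, x ≠ 0 ∧ hammingNorm x = d) ∧ ∀ x ∈ C, x ≠ 0 → d ≤ hammingNorm x

/-- `C` is an MDS code: the trivial code `{0}` counts as MDS, otherwise
the minimum distance is `n - dim C + 1`. -/
def IsMDS {F : Type*} [Field F] [DecidableEq F] {n : ℕ} (C : Submodule F (Fin n → F)) : Prop :=
  C = ⊥ ∨ IsMinDist C (n - Module.finrank F C + 1)

/-- `C` is `λ`-constacyclic: `(λ c_n, c_1, …, c_{n-1}) ∈ C` whenever `(c_1, …, c_n) ∈ C`. -/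
def IsConstacyclic {F : Type*} [Field F] {n : ℕ} (lam : F) (C : Submodule F (Fin n → F)) : Prop :=
  ∀ c ∈ C, (fun i : Fin n => if (i : ℕ) = 0 then lam * c ⟨n - 1, by have := i.isLt; omega⟩
    else c ⟨(i : ℕ) - 1, by have := i.isLt; omega⟩) ∈ C

/-- The Euclidean dual of a linear code. -/
def euclideanDual {F : Type*} [Field F] {n : ℕ}
    (C : Submodule F (Fin n → F)) : Submodule F (Fin n → F) where
  carrier := {x | ∀ c ∈ C, ∑ i, c i * x i = 0}
  zero_mem' := fun c _ => by simp
  add_mem' := by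
    intro x y hx hy c hc
    calc ∑ i, c i * (x + y) i = ∑ i, (c i * x i + c i * y i) := by
          refine Finset.sum_congr rfl fun i _ => by simp [mul_add]
      _ = 0 := by rw [Finset.sum_add_distrib, hx c hc, hy c hc, add_zero]
  smul_mem' := by
    intro a x hx c hc
    calc ∑ i, c i * (a • x) i = a * ∑ i, c i * x i := by
          rw [Finset.mul_sum]
          refine Finset.sum_congr rfl fun i _ => by
            simp only [Pi.smul_apply, smul_eq_mul]; ring
      _ = 0 := by rw [hx c hc, mul_zero]

/-- The coordinatewise `p^m`-power map `x ↦ (x_i^{p^m})_i`, as a semilinear map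
with respect to the iterated Frobenius. -/
def frobPowMap (p m : ℕ) [Fact p.Prime] (F : Type*) [Field F] [CharP F p] (n : ℕ) :
    (Fin n → F) →ₛₗ[iterateFrobenius F p m] (Fin n → F) where
  toFun x := fun i => x i ^ p ^ m
  map_add' x y := funext fun i => by simpa using add_pow_char_pow (x i) (y i) p m
  map_smul' a x := funext fun i => by
    simp [iterateFrobenius_def, mul_pow]

/- The vector `(c_j θ^{(1+rh)j})_j` has the same support as `c` and is annihilated by the first
`δ - 1` rows of the Vandermonde matrix on the distinct nodes `θ^{rj}`, `j < n` (distinct because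
`θ^r` is a primitive `n`-th root of unity). Restricted to its support it is annihilated by a square
Vandermonde matrix as soon as its weight is below `δ`, hence it vanishes. -/

theorem lt_hammingNorm_of_sum_mul_pow_eq_zero {R ι : Type*} [CommRing R] [IsDomain R]
    [DecidableEq R] [Fintype ι] {γ c : ι → R} (hγ : Function.Injective γ) (hc : c ≠ 0) {d : ℕ}
    (hsum : ∀ i < d, ∑ j, c j * γ j ^ i = 0) : d < hammingNorm c := by
  by_contra! hle
  set s := univ.filter (c · ≠ 0)
  let σ : Fin s.card ≃ s := s.equivFin.symm
  have hrestrict : (fun t => c (σ t)) = 0 := by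
    refine Matrix.eq_zero_of_forall_pow_sum_mul_pow_eq_zero
      (f := fun t => γ (σ t)) (hγ.comp (Subtype.val_injective.comp σ.injective)) fun i => ?_
    calc ∑ t, c (σ t) * γ (σ t) ^ (i : ℕ) = ∑ j ∈ s, c j * γ j ^ (i : ℕ) := by
          rw [← sum_coe_sort s]
          exact σ.sum_comp fun j : s => c j * γ j ^ (i : ℕ)
      _ = ∑ j, c j * γ j ^ (i : ℕ) :=
          sum_filter_of_ne fun j _ hj => left_ne_zero_of_mul hj
      _ = 0 := hsum i (lt_of_lt_of_le i.isLt hle)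
  obtain ⟨j, hj⟩ := Function.ne_iff.mp hc
  have hjs : j ∈ s := mem_filter.mpr ⟨mem_univ j, hj⟩
  exact hj (by simpa using congrFun hrestrict (σ.symm ⟨j, hjs⟩))

theorem IsPrimitiveRoot.injective_pow_fin {M : Type*} [CommMonoid M] {ζ : M} {n : ℕ}
    (hζ : IsPrimitiveRoot ζ n) : Function.Injective fun j : Fin n => ζ ^ (j : ℕ) :=
  fun _ _ h => Fin.ext (hζ.pow_inj (Fin.isLt _) (Fin.isLt _) h)

theorem bch_bound_constacyclic_general
    (n r : ℕ)
    (F E : Type*) [Field F] [Fintype F] [DecidableEq F] [Field E] [Algebra F E]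
    (lam : F) (hlam : lam ≠ 0) (hr : orderOf lam = r)
    (θ : E) (hθ : IsPrimitiveRoot θ (r * n))
    (C : Submodule F (Fin n → F))
    (h δ : ℕ)
    (hroots : ∀ c ∈ C, ∀ i : ℕ, h ≤ i → i ≤ h + (δ - 2) →
      ∑ j : Fin n, algebraMap F E (c j) * θ ^ ((1 + r * i) * (j : ℕ)) = 0) :
    ∀ x ∈ C, x ≠ 0 → δ ≤ hammingNorm x := by
  classical
  intro x hx hx0
  have hn : 0 < n := Nat.pos_of_ne_zero fun hn => hx0 (funext fun j => (hn ▸ j).elim0)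
  have hr0 : 0 < r := hr ▸ orderOf_units (y := Units.mk0 lam hlam) ▸ orderOf_pos _
  have hθ0 : θ ≠ 0 := hθ.ne_zero (Nat.mul_pos hr0 hn).ne'
  let twist : ∀ j : Fin n, F → E := fun j a => algebraMap F E a * θ ^ ((1 + r * h) * (j : ℕ))
  have htwist : hammingNorm (fun j => twist j (x j)) = hammingNorm x :=
    hammingNorm_comp twist
      (fun j => (mul_left_injective₀ (pow_ne_zero _ hθ0)).comp (algebraMap F E).injective)
      (fun j => by simp [twist])
  have hγ : Function.Injective fun j : Fin n => (θ ^ r) ^ (j : ℕ) :=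
    (hθ.pow (Nat.mul_pos hr0 hn) rfl).injective_pow_fin
  have htwist_ne : (fun j => twist j (x j)) ≠ 0 := by
    rwa [← hammingNorm_ne_zero_iff, htwist, hammingNorm_ne_zero_iff]
  have hweight : δ - 1 < hammingNorm fun j => twist j (x j) :=
    lt_hammingNorm_of_sum_mul_pow_eq_zero hγ htwist_ne fun i hi => by
      rw [← hroots x hx (h + i) (Nat.le_add_right _ _) (by omega)]
      refine sum_congr rfl fun j _ => ?_
      simp only [twist, mul_assoc, ← pow_mul, ← pow_add]
      ring_nf
  omega

/-- **BCH bound for constacyclic codes.**  Let `C` be a `λ`-constacyclic code of length `n`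
over `F_q` (`q = p^e`, `gcd(n,q) = 1`), let `r` be the multiplicative order of `λ`,
`m` the multiplicative order of `q` modulo `rn`, and `θ ∈ F_{q^m}` a primitive `rn`-th
root of unity with `θ^n = λ`.  If for some `h` and `δ ≥ 2` every codeword vanishes at
`θ^{1+ri}` for `i = h, …, h + δ - 2`, then the minimum distance of `C` is at least `δ`. -/
theorem bch_bound_constacyclic
    (p e n r m : ℕ) [Fact p.Prime] (he : 0 < e)
    (F E : Type*) [Field F] [Fintype F] [DecidableEq F] [Field E] [Fintype E] [Algebra F E]
    (hF : Fintype.card F = p ^ e) (hE : Fintype.card E = (p ^ e) ^ m)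
    (hn : Nat.Coprime n (p ^ e))
    (lam : F) (hlam : lam ≠ 0) (hr : orderOf lam = r)
    (hm0 : 0 < m) (hm1 : (p ^ e) ^ m ≡ 1 [MOD r * n])
    (hm2 : ∀ m', 0 < m' → (p ^ e) ^ m' ≡ 1 [MOD r * n] → m ≤ m')
    (θ : E) (hθ : IsPrimitiveRoot θ (r * n)) (hθn : θ ^ n = algebraMap F E lam)
    (C : Submodule F (Fin n → F)) (hC : IsConstacyclic lam C)
    (h δ : ℕ) (hδ : 2 ≤ δ)
    (hroots : ∀ c ∈ C, ∀ i : ℕ, h ≤ i → i ≤ h + (δ - 2) →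
      ∑ j : Fin n, algebraMap F E (c j) * θ ^ ((1 + r * i) * (j : ℕ)) = 0) :
    ∀ x ∈ C, x ≠ 0 → δ ≤ hammingNorm x :=
  bch_bound_constacyclic_general n r F E lam hlam hr θ hθ C h δ hroots
end

section
/- Let C be a linear code of length n over F_q and let 0 ≤ k < e where q = p^e. Then C is a maximum distance separable (MDS) code if and only if its k-Galois dual C^{⊥_k} is an MDS code. -/
open Finset

/-!
Over a field of characteristic `p`, the coordinatewise power map `x ↦ (x_i ^ p ^ k)_i` is
semilinear over the `k`-th Frobenius, preserves Hamming weights, and is bijective when the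
field is perfect (e.g. finite). Since `C^{⊥_k}` is the preimage of the Euclidean dual `C^⊥`
under this map, it has the same dimension and minimum distance as `C^⊥`. So the theorem
reduces to the classical fact that `C` is MDS iff `C^⊥` is: if `C` has dimension `l` and
minimum distance `n - l + 1`, then every `l` coordinates form an information set of `C`,
which forbids dual words of weight at most `l`.
-/

open Module

section Hamming

variable {ι F : Type*} [Field F]

noncomputable def restrictCoords (C : Submodule F (ι → F)) (S : Finset ι) : C →ₗ[F] (S → F) :=
  (LinearMap.funLeft F F ((↑) : S → ι)).comp C.subtype

theorem finrank_le_card_of_injective_restrictCoords {C : Submodule F (ι → F)} {S : Finset ι}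
    (h : Function.Injective (restrictCoords C S)) : finrank F C ≤ #S := by
  simpa using LinearMap.finrank_le_finrank_of_injective h

variable [Fintype ι] [DecidableEq F]

theorem hammingNorm_add_card_le {x : ι → F} {S : Finset ι} (h : ∀ i ∈ S, x i = 0) :
    hammingNorm x + #S ≤ Fintype.card ι := by
  classical
  have hdisj : Disjoint ({i | x i ≠ 0} : Finset ι) S :=
    Finset.disjoint_left.mpr fun i hi hiS => (Finset.mem_filter.mp hi).2 (h i hiS)
  exact (Finset.card_union_of_disjoint hdisj).symm.le.trans (Finset.card_le_univ _)

theorem injective_restrictCoords {C : Submodule F (ι → F)} {S : Finset ι}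
    (h : ∀ x ∈ C, x ≠ 0 → Fintype.card ι < hammingNorm x + #S) :
    Function.Injective (restrictCoords C S) := by
  rw [← LinearMap.ker_eq_bot, Submodule.eq_bot_iff]
  intro x hx
  by_contra hx0
  have hvanish : ∀ i ∈ S, (x : ι → F) i = 0 := fun i hi => congrFun hx ⟨i, hi⟩
  have := h x x.2 (Submodule.coe_eq_zero.not.mpr hx0)
  have := hammingNorm_add_card_le hvanish
  omega

/-- The Singleton bound. -/
theorem exists_hammingNorm_add_finrank_le (D : Submodule F (ι → F)) (hD : D ≠ ⊥) :
    ∃ x ∈ D, x ≠ 0 ∧ hammingNorm x + finrank F D ≤ Fintype.card ι + 1 := by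
  by_contra! hcon
  have : Nontrivial D := Submodule.nontrivial_iff_ne_bot.mpr hD
  have hpos : 0 < finrank F D := finrank_pos
  have hle : finrank F D ≤ Fintype.card ι := by simpa using Submodule.finrank_le D
  obtain ⟨S, -, hS⟩ := Finset.exists_subset_card_eq (s := (Finset.univ : Finset ι))
    (n := finrank F D - 1) (by rw [Finset.card_univ]; omega)
  have := finrank_le_card_of_injective_restrictCoords
    (injective_restrictCoords (S := S) fun x hx hx0 => by have := hcon x hx hx0; omega)
  omega

end Hamming

section Euclidean

variable {F : Type*} [Field F] {n : ℕ}

theorem finrank_le_length (C : Submodule F (Fin n → F)) : finrank F C ≤ n := by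
  simpa using Submodule.finrank_le C

theorem euclideanDual_eq_comap_dualAnnihilator (C : Submodule F (Fin n → F)) :
    euclideanDual C = C.dualAnnihilator.comap (dotProductEquiv F (Fin n)).toLinearMap := by
  ext x
  simp only [Submodule.mem_comap, Submodule.mem_dualAnnihilator, LinearEquiv.coe_coe,
    dotProductEquiv_apply_apply, dotProduct]
  exact forall₂_congr fun c _ => by simp only [mul_comm]

theorem finrank_euclideanDual (C : Submodule F (Fin n → F)) :
    finrank F (euclideanDual C) = n - finrank F C := by
  have h := Subspace.finrank_add_finrank_dualAnnihilator_eq C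
  rw [euclideanDual_eq_comap_dualAnnihilator, Submodule.comap_equiv_eq_map_symm,
    LinearEquiv.finrank_map_eq]
  simp only [finrank_fin_fun] at h
  omega

theorem euclideanDual_euclideanDual (C : Submodule F (Fin n → F)) :
    euclideanDual (euclideanDual C) = C := by
  have hle : C ≤ euclideanDual (euclideanDual C) := fun c hc y hy => by
    simpa only [mul_comm] using hy c hc
  refine (Submodule.eq_of_le_of_finrank_le hle ?_).symm
  rw [finrank_euclideanDual, finrank_euclideanDual]
  omega

variable [DecidableEq F]

theorem isMDS_iff_forall_le_hammingNorm (C : Submodule F (Fin n → F)) :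
    IsMDS C ↔ ∀ x ∈ C, x ≠ 0 → n - finrank F C + 1 ≤ hammingNorm x := by
  refine ⟨?_, fun h => ?_⟩
  · rintro (rfl | ⟨-, h⟩)
    · exact fun x hx hx0 => absurd ((Submodule.mem_bot F).mp hx) hx0
    · exact h
  · by_cases hC : C = ⊥
    · exact Or.inl hC
    obtain ⟨x, hx, hx0, hwt⟩ := exists_hammingNorm_add_finrank_le C hC
    have := h x hx hx0
    have := finrank_le_length C
    simp only [Fintype.card_fin] at hwt
    exact Or.inr ⟨⟨x, hx, hx0, by omega⟩, h⟩

theorem le_hammingNorm_of_mem_euclideanDual {C : Submodule F (Fin n → F)}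
    (hC : ∀ x ∈ C, x ≠ 0 → n - finrank F C + 1 ≤ hammingNorm x)
    {y : Fin n → F} (hy : y ∈ euclideanDual C) (hy0 : y ≠ 0) :
    finrank F C + 1 ≤ hammingNorm y := by
  classical
  by_contra! hwt
  have hl := finrank_le_length C
  obtain ⟨T, hsupp, hT⟩ := Finset.exists_superset_card_eq (s := {i | y i ≠ 0})
    (n := finrank F C) (by unfold hammingNorm at hwt; omega) (by simpa using hl)
  have hinj : Function.Injective (restrictCoords C T) :=
    injective_restrictCoords fun x hx hx0 => by
      have := hC x hx hx0
      simp only [Fintype.card_fin]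
      omega
  have hsurj : Function.Surjective (restrictCoords C T) :=
    (LinearMap.injective_iff_surjective_of_finrank_eq_finrank (by simp [hT])).mp hinj
  obtain ⟨i₀, hi₀⟩ := Function.ne_iff.mp hy0
  have hi₀T : i₀ ∈ T := hsupp (by simpa using hi₀)
  -- a codeword that is the unit vector `e_{i₀}` on `T ⊇ supp y` pairs with `y` to `y i₀ ≠ 0`
  obtain ⟨c, hc⟩ := hsurj (Pi.single ⟨i₀, hi₀T⟩ 1)
  have hcT : ∀ i (hi : i ∈ T),
      (c : Fin n → F) i = (Pi.single (⟨i₀, hi₀T⟩ : T) (1 : F) : T → F) ⟨i, hi⟩ :=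
    fun i hi => congrFun hc ⟨i, hi⟩
  have hpair : ∑ i, (c : Fin n → F) i * y i = y i₀ := by
    rw [Finset.sum_eq_single i₀]
    · simp [hcT i₀ hi₀T]
    · intro i _ hi
      by_cases hyi : y i = 0
      · rw [hyi, mul_zero]
      · simp [hcT i (hsupp (by simpa using hyi)), hi]
    · simp
  exact hi₀ (hpair.symm.trans (hy c c.2))

theorem IsMDS.euclideanDual {C : Submodule F (Fin n → F)} (h : IsMDS C) :
    IsMDS (euclideanDual C) := by
  rw [isMDS_iff_forall_le_hammingNorm] at h ⊢
  intro y hy hy0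
  have := le_hammingNorm_of_mem_euclideanDual h hy hy0
  have := finrank_le_length C
  rw [finrank_euclideanDual]
  omega

theorem isMDS_euclideanDual_iff (C : Submodule F (Fin n → F)) :
    IsMDS (euclideanDual C) ↔ IsMDS C :=
  ⟨fun h => euclideanDual_euclideanDual C ▸ h.euclideanDual, IsMDS.euclideanDual⟩

end Euclidean

section SemilinearTransfer

open Function

theorem finrank_comap_of_bijective {R M : Type*} [Semiring R] [AddCommMonoid M] [Module R M]
    {σ : R →+* R} (hσ : Bijective σ) {f : M →ₛₗ[σ] M} (hf : Bijective f) (D : Submodule R M) :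
    finrank R (D.comap f) = finrank R D := by
  let j : D.comap f ≃+ D := AddEquiv.ofBijective
    ({ toFun := fun x => ⟨f x, x.2⟩
       map_zero' := by ext; simp
       map_add' := fun x y => by ext; simp } : D.comap f →+ D)
    ⟨fun x y h => Subtype.ext (hf.1 (congrArg Subtype.val h)),
      fun y => let ⟨x, hx⟩ := hf.2 y; ⟨⟨x, show f x ∈ D from hx ▸ y.2⟩, Subtype.ext hx⟩⟩
  exact congrArg Cardinal.toNat
    (rank_eq_of_equiv_equiv σ j hσ fun r x => Subtype.ext (f.map_smulₛₗ r x))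

variable {F : Type*} [Field F] [DecidableEq F] {n : ℕ}

theorem isMDS_comap_iff {σ : F →+* F} (hσ : Bijective σ) {f : (Fin n → F) →ₛₗ[σ] (Fin n → F)}
    (hf : Bijective f) (hwt : ∀ x, hammingNorm (f x) = hammingNorm x)
    (D : Submodule F (Fin n → F)) :
    IsMDS (D.comap f) ↔ IsMDS D := by
  simp only [isMDS_iff_forall_le_hammingNorm, finrank_comap_of_bijective hσ hf,
    Submodule.mem_comap]
  refine ⟨fun h y hy hy0 => ?_, fun h x hx hx0 => ?_⟩
  · obtain ⟨x, rfl⟩ := hf.2 y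
    exact hwt x ▸ h x hy fun hx0 => hy0 (hx0 ▸ map_zero f)
  · exact hwt x ▸ h _ hx fun h0 => hx0 (hf.1 (h0.trans (map_zero f).symm))

end SemilinearTransfer

section Frobenius

variable (p k : ℕ) [Fact p.Prime] (F : Type*) [Field F] [CharP F p] (n : ℕ)

theorem hammingNorm_frobPowMap [DecidableEq F] (x : Fin n → F) :
    hammingNorm (frobPowMap p k F n x) = hammingNorm x :=
  hammingNorm_comp (fun _ => iterateFrobenius F p k) (fun _ => iterateFrobenius_inj F p k)
    fun _ => map_zero _

theorem bijective_frobPowMap [PerfectRing F p] : Function.Bijective (frobPowMap p k F n) :=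
  Function.Bijective.piMap fun _ => bijective_iterateFrobenius F p k

variable {p k F n}

theorem galoisDual_eq_comap_euclideanDual (C : Submodule F (Fin n → F)) :
    galoisDual p k C = (euclideanDual C).comap (frobPowMap p k F n) :=
  rfl

end Frobenius

theorem mds_iff_galoisDual_mds_general
    (p k : ℕ) [Fact p.Prime]
    (F : Type*) [Field F] [Fintype F] [DecidableEq F] [CharP F p]
    {n : ℕ} (C : Submodule F (Fin n → F)) :
    IsMDS C ↔ IsMDS (galoisDual p k C) := by
  rw [galoisDual_eq_comap_euclideanDual,
    isMDS_comap_iff (bijective_iterateFrobenius F p k) (bijective_frobPowMap p k F n)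
      (hammingNorm_frobPowMap p k F n),
    isMDS_euclideanDual_iff]

/-- A linear code `C` of length `n` over `F_q` (`q = p^e`, `0 ≤ k < e`) is MDS
if and only if its `k`-Galois dual `C^{⊥_k}` is MDS. -/
theorem mds_iff_galoisDual_mds
    (p e k : ℕ) [Fact p.Prime] (hk : k < e)
    (F : Type*) [Field F] [Fintype F] [DecidableEq F] [CharP F p]
    (hF : Fintype.card F = p ^ e)
    {n : ℕ} (C : Submodule F (Fin n → F)) :
    IsMDS C ↔ IsMDS (galoisDual p k C) :=
  mds_iff_galoisDual_mds_general p k F C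
end

section
/- Let C be a linear code of length n and dimension l over F_q with generator matrix G (an l × n matrix whose rows form a basis of C), and let 0 ≤ k < e where q = p^e. Then C is a k-Galois LCD code if and only if the l × l matrix G G^‡ is nonsingular, where G^‡ is the transpose of the matrix obtained from G by raising every entry to the power p^{e-k}. -/
open Finset

/-!
Since `x ↦ x ^ p ^ (e - k)` is injective on `F` and `x ^ p ^ e = x`, raising the defining sums of
`C^{⊥_k}` to the power `p ^ (e - k)` shows that `C^{⊥_k}` is the kernel of `G^{(p^{e-k})}`.
Writing `x ∈ C` as `x = b G`, the condition `G^{(p^{e-k})} x = 0` reads `(G G^‡)ᵀ b = 0`, and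
`b ↦ b G` is injective, so `C ∩ C^{⊥_k} = 0` exactly when `G G^‡` is nonsingular.
-/

open Matrix Submodule

section GaloisDual

variable {p : ℕ} [Fact p.Prime] {F : Type*} [Field F] [CharP F p] {n : ℕ}

theorem mem_galoisDual_span_iff {ι : Type*} (k : ℕ) (v : ι → Fin n → F) (x : Fin n → F) :
    x ∈ galoisDual p k (span F (Set.range v)) ↔ ∀ j, v j ⬝ᵥ frobPowMap p k F n x = 0 := by
  refine ⟨fun hx j => hx (v j) (subset_span ⟨j, rfl⟩), fun hx c hc => ?_⟩
  change c ⬝ᵥ frobPowMap p k F n x = 0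
  induction hc using span_induction with
  | mem c hc => obtain ⟨j, rfl⟩ := hc; exact hx j
  | zero => exact zero_dotProduct _
  | add a b _ _ ha hb => rw [add_dotProduct, ha, hb, add_zero]
  | smul a c _ hc => rw [smul_dotProduct, hc, smul_zero]

theorem dotProduct_frobPowMap_eq_zero_iff [Fintype F] {e k : ℕ} (hF : Fintype.card F = p ^ e)
    (hk : k ≤ e) (c x : Fin n → F) :
    c ⬝ᵥ frobPowMap p k F n x = 0 ↔ frobPowMap p (e - k) F n c ⬝ᵥ x = 0 := by
  have hfix (a : F) : (a ^ p ^ k) ^ p ^ (e - k) = a := by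
    rw [← pow_mul, ← pow_add, Nat.add_sub_cancel' hk, ← hF, FiniteField.pow_card]
  rw [← (iterateFrobenius_inj F p (e - k)).eq_iff, map_zero, RingHom.map_dotProduct]
  congr! 2
  exact funext fun i => hfix (x i)

theorem galoisDual_span_eq_ker [Fintype F] {e k l : ℕ} (hF : Fintype.card F = p ^ e)
    (hk : k ≤ e) (G : Matrix (Fin l) (Fin n) F) :
    galoisDual p k (span F (Set.range G.row)) =
      LinearMap.ker (G.map (· ^ p ^ (e - k))).mulVecLin := by
  ext x
  simp only [mem_galoisDual_span_iff, dotProduct_frobPowMap_eq_zero_iff hF hk, LinearMap.mem_ker,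
    mulVecLin_apply, funext_iff]
  rfl

end GaloisDual

theorem range_vecMulLinear_inf_ker_mulVecLin_eq_bot_iff {K m l : Type*} [Field K] [Fintype m]
    [Fintype l] [DecidableEq l] {G A : Matrix l m K} (hG : LinearIndependent K G.row) :
    LinearMap.range G.vecMulLinear ⊓ LinearMap.ker A.mulVecLin = ⊥ ↔ (A * Gᵀ).det ≠ 0 := by
  have hcomp : A.mulVecLin ∘ₗ G.vecMulLinear = (A * Gᵀ).mulVecLin :=
    LinearMap.ext fun b => by
      rw [LinearMap.comp_apply, mulVecLin_apply, mulVecLin_apply, vecMulLinear_apply,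
        ← mulVec_transpose, mulVec_mulVec]
  rw [← map_comap_eq, ← LinearMap.ker_comp, hcomp, ← map_bot G.vecMulLinear,
    (map_injective_of_injective (vecMul_injective_iff.mpr hG)).eq_iff, ker_mulVecLin_eq_bot_iff,
    ne_eq, ← exists_mulVec_eq_zero_iff]
  simp only [not_exists, not_and, not_imp_not]

theorem galoisLCD_iff_det_ne_zero_general
    (p e k : ℕ) [Fact p.Prime] (hk : k < e)
    (F : Type*) [Field F] [Fintype F] [CharP F p]
    (hF : Fintype.card F = p ^ e)
    {n l : ℕ} (C : Submodule F (Fin n → F))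
    (G : Matrix (Fin l) (Fin n) F)
    (hGind : LinearIndependent F (fun i : Fin l => G i))
    (hGspan : C = Submodule.span F (Set.range (fun i : Fin l => G i))) :
    IsGaloisLCD p k C ↔ (G * (G.map (fun a => a ^ p ^ (e - k))).transpose).det ≠ 0 := by
  rw [show (fun i : Fin l => G i) = G.row from rfl] at hGind hGspan
  subst hGspan
  rw [IsGaloisLCD, galoisDual_span_eq_ker hF hk.le, ← range_vecMulLinear, ← det_transpose,
    transpose_mul, transpose_transpose]
  exact range_vecMulLinear_inf_ker_mulVecLin_eq_bot_iff hGind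

/-- A linear code `C` of length `n` and dimension `l` over `F_q` (`q = p^e`, `0 ≤ k < e`)
with generator matrix `G` is a `k`-Galois LCD code if and only if `G G^‡` is nonsingular,
where `G^‡` is the transpose of the entrywise `p^{e-k}`-th power of `G`. -/
theorem galoisLCD_iff_det_ne_zero
    (p e k : ℕ) [Fact p.Prime] (hk : k < e)
    (F : Type*) [Field F] [Fintype F] [CharP F p]
    (hF : Fintype.card F = p ^ e)
    {n l : ℕ} (C : Submodule F (Fin n → F)) (hdim : Module.finrank F C = l)
    (G : Matrix (Fin l) (Fin n) F)
    (hGind : LinearIndependent F (fun i : Fin l => G i))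
    (hGspan : C = Submodule.span F (Set.range (fun i : Fin l => G i))) :
    IsGaloisLCD p k C ↔ (G * (G.map (fun a => a ^ p ^ (e - k))).transpose).det ≠ 0 :=
  galoisLCD_iff_det_ne_zero_general p e k hk F hF C G hGind hGspan
end

section
/- Let q = p^e, 0 ≤ k < e, let s = gcd(p^{e-k}+1, p^e-1) and write p^e - 1 = s·t. If n is a positive integer coprime to q with n ≤ q + 1, and 0 ≤ l < min{t, n}, then there exists a k-Galois LCD MDS code over F_q of length n, dimension n - l, and minimum Hamming distance l + 1. -/
open Finset

/-!
Take a generalized Reed–Solomon code of dimension `m = n - l` over `n ≤ q + 1` points of the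
projective line: its generator matrix is `diag(v) · A`, where the row of `A` belonging to the point
`(x : y)` is `(x^j y^(m-1-j))_j`. Any `m` rows of `A` are independent (projective Vandermonde), so
the code is MDS.

Writing `φ x = x^(p^k)`, a codeword `G c` lies in the `k`-Galois dual iff `Gᵀ G^φ φ(c) = 0`, so the
code is `k`-Galois LCD once `Aᵀ diag(e) A^φ` is invertible, where `e_i = v_i^(p^k+1)`. By the
matrix determinant lemma this determinant is affine in each single weight `e_i`. Starting from
weights supported on `m` rows, where it is a product of two nonzero minors, the weights can thus be
moved one at a time into the set of `(p^k+1)`-th powers of units without making it vanish, as soon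
as that set has two elements. It has `(q-1)/gcd(q-1, p^k+1) ≥ t > l` elements, since
`gcd(q-1, p^k+1)` divides `s`.
-/

open Matrix

namespace Matrix

theorem det_add_smul_vecMulVec {n R : Type*} [Fintype n] [DecidableEq n] [CommRing R]
    {M : Matrix n n R} (hM : IsUnit M.det) (u w : n → R) (x : R) :
    (M + x • vecMulVec u w).det = M.det * (1 + x * (w ⬝ᵥ M⁻¹ *ᵥ u)) := by
  rw [vecMulVec_eq Unit, ← smul_mul, ← replicateCol_smul, det_add_replicateCol_mul_replicateRow hM,
    det_unique (n := Unit)]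
  simp only [replicateRow, replicateCol, Pi.smul_apply, smul_eq_mul, PUnit.default_eq_unit,
    add_apply, one_apply_eq, mul_apply, of_apply, sum_mul, dotProduct, mulVec, mul_sum]
  rw [sum_comm]
  congr 2
  exact sum_congr rfl fun _ _ => sum_congr rfl fun _ _ => by ring

section WeightedProduct

variable {R ι m : Type*} [CommRing R] [Fintype ι] [DecidableEq ι]

theorem transpose_mul_diagonal_mul_apply (A B : Matrix ι m R) (e : ι → R) (a b : m) :
    (Aᵀ * diagonal e * B) a b = ∑ i, A i a * e i * B i b := by
  rw [mul_apply]
  simp_rw [mul_diagonal, transpose_apply]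

theorem transpose_mul_diagonal_update_mul (A B : Matrix ι m R) (e : ι → R) (i : ι) (x : R) :
    Aᵀ * diagonal (Function.update e i x) * B
      = Aᵀ * diagonal e * B + (x - e i) • vecMulVec (A i) (B i) := by
  ext a b
  simp only [transpose_mul_diagonal_mul_apply, add_apply, smul_apply, vecMulVec_apply, smul_eq_mul]
  rw [← add_sum_erase _ _ (mem_univ i), ← add_sum_erase _ _ (mem_univ i),
    sum_congr rfl fun j hj => by rw [Function.update_of_ne (ne_of_mem_erase hj)],
    Function.update_self]
  ring

theorem transpose_mul_diagonal_indicator_mul [Fintype m] (A B : Matrix ι m R) (τ : m ↪ ι)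
    (h : R) :
    Aᵀ * diagonal (fun i => if i ∈ univ.map τ then h else 0) * B
      = h • ((A.submatrix τ id)ᵀ * B.submatrix τ id) := by
  ext a b
  rw [transpose_mul_diagonal_mul_apply]
  simp only [smul_apply, mul_apply, submatrix_apply, id, transpose_apply, smul_eq_mul, mul_ite,
    ite_mul, mul_zero, zero_mul, sum_ite_mem, univ_inter, sum_map, mul_sum]
  exact sum_congr rfl fun _ _ => by ring

theorem transpose_mul_map_diagonal_mul (φ : R →+* R) (v : ι → R) (A : Matrix ι m R) :
    (diagonal v * A)ᵀ * (diagonal v * A).map φ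
      = Aᵀ * diagonal (fun i => v i * φ (v i)) * A.map φ := by
  rw [Matrix.map_mul, diagonal_map (map_zero φ), transpose_mul, diagonal_transpose,
    Matrix.mul_assoc, ← Matrix.mul_assoc (diagonal v), diagonal_mul_diagonal, Matrix.mul_assoc]

end WeightedProduct

variable {F : Type*} [Field F] {ι : Type*} {m : ℕ}

def RowsInGeneralPosition (A : Matrix ι (Fin m) F) : Prop :=
  ∀ τ : Fin m → ι, Function.Injective τ → (A.submatrix τ id).det ≠ 0

theorem rowsInGeneralPosition_rectVandermonde {v w : ι → F}
    (h : ∀ i j, i ≠ j → v j * w i - v i * w j ≠ 0) :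
    (rectVandermonde v w m).RowsInGeneralPosition := by
  intro τ hτ
  change (projVandermonde (v ∘ τ) (w ∘ τ)).det ≠ 0
  rw [det_projVandermonde]
  exact prod_ne_zero_iff.2 fun i _ => prod_ne_zero_iff.2 fun j hj =>
    h _ _ (hτ.ne (mem_Ioi.1 hj).ne)

namespace RowsInGeneralPosition

variable {A : Matrix ι (Fin m) F}

theorem diagonal_mul [Fintype ι] [DecidableEq ι] (hA : A.RowsInGeneralPosition) {d : ι → F}
    (hd : ∀ i, d i ≠ 0) : (diagonal d * A).RowsInGeneralPosition := by
  intro τ hτ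
  have hsub : (diagonal d * A).submatrix τ id = of fun i j => d (τ i) * A.submatrix τ id i j := by
    ext; simp
  rw [hsub, det_mul_column]
  exact mul_ne_zero (prod_ne_zero_iff.2 fun i _ => hd _) (hA τ hτ)

theorem map (hA : A.RowsInGeneralPosition) {K : Type*} [Field K] (φ : F →+* K) :
    (A.map φ).RowsInGeneralPosition := by
  intro τ hτ
  change (φ.mapMatrix (A.submatrix τ id)).det ≠ 0
  rw [← RingHom.map_det]
  exact (map_ne_zero φ).2 (hA τ hτ)

theorem eq_zero_of_mulVec_eq_zero_on (hA : A.RowsInGeneralPosition) {c : Fin m → F}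
    {Z : Finset ι} (hZ : m ≤ #Z) (hc : ∀ i ∈ Z, (A *ᵥ c) i = 0) : c = 0 := by
  obtain ⟨τ⟩ : Nonempty (Fin m ↪ Z) := Function.Embedding.nonempty_of_card_le (by simpa)
  refine eq_zero_of_mulVec_eq_zero (hA _ (Subtype.val_injective.comp τ.injective)) ?_
  ext j
  exact hc _ (τ j).2

variable [Fintype ι]

theorem mulVecLin_injective (hA : A.RowsInGeneralPosition) (hm : m ≤ Fintype.card ι) :
    Function.Injective A.mulVecLin := by
  refine (injective_iff_map_eq_zero _).2 fun c hc => hA.eq_zero_of_mulVec_eq_zero_on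
    (Z := univ) (by simpa) fun i _ => ?_
  simp [← mulVecLin_apply, hc]

theorem card_lt_hammingNorm_add [DecidableEq F] (hA : A.RowsInGeneralPosition) {c : Fin m → F}
    (hc : c ≠ 0) : Fintype.card ι < hammingNorm (A *ᵥ c) + m := by
  by_contra! h
  have hsplit := card_filter_add_card_filter_not (s := univ) (fun i => (A *ᵥ c) i = 0)
  rw [card_univ] at hsplit
  simp only [hammingNorm, ne_eq] at h
  exact hc (hA.eq_zero_of_mulVec_eq_zero_on (Z := {i | (A *ᵥ c) i = 0}) (by omega)
    fun i hi => (mem_filter.1 hi).2)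

end RowsInGeneralPosition

variable [Fintype ι] [DecidableEq ι] {A B : Matrix ι (Fin m) F} {H : Finset F}

theorem exists_mem_det_update_ne_zero {e : ι → F} (he : (Aᵀ * diagonal e * B).det ≠ 0)
    (hH : 1 < #H) (i : ι) : ∃ x ∈ H, (Aᵀ * diagonal (Function.update e i x) * B).det ≠ 0 := by
  obtain ⟨x, hx, y, hy, hxy⟩ := one_lt_card.1 hH
  simp only [transpose_mul_diagonal_update_mul, det_add_smul_vecMulVec (isUnit_iff_ne_zero.2 he)]
  set c := B i ⬝ᵥ (Aᵀ * diagonal e * B)⁻¹ *ᵥ A i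
  -- `x ↦ 1 + (x - e i) * c` is `1` at `x = e i`, so it has at most one root
  by_contra! h
  have hx' := (mul_eq_zero.1 (h x hx)).resolve_left he
  have hy' := (mul_eq_zero.1 (h y hy)).resolve_left he
  have hc : c = 0 := by
    have : (x - y) * c = 0 := by linear_combination hx' - hy'
    simpa [sub_eq_zero, hxy] using this
  simp [hc] at hx'

theorem exists_forall_mem_det_ne_zero_of_det_ne_zero (hH : 1 < #H) {e : ι → F}
    (he : (Aᵀ * diagonal e * B).det ≠ 0) :
    ∃ e' : ι → F, (∀ i, e' i ∈ H) ∧ (Aᵀ * diagonal e' * B).det ≠ 0 := by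
  suffices ∀ T : Finset ι, ∀ e : ι → F, (∀ i ∉ T, e i ∈ H) → (Aᵀ * diagonal e * B).det ≠ 0 →
      ∃ e' : ι → F, (∀ i, e' i ∈ H) ∧ (Aᵀ * diagonal e' * B).det ≠ 0 from
    this univ e (by simp) he
  intro T
  induction T using Finset.induction_on with
  | empty => exact fun e he hdet => ⟨e, fun i => he i (notMem_empty i), hdet⟩
  | insert i T _ ih =>
    intro e he hdet
    obtain ⟨x, hx, hdet'⟩ := exists_mem_det_update_ne_zero hdet hH i
    refine ih _ (fun j hj => ?_) hdet'
    rcases eq_or_ne j i with rfl | hji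
    · simpa
    · simpa [hji] using he j (by simp [hji, hj])

theorem RowsInGeneralPosition.exists_forall_mem_det_ne_zero (hA : A.RowsInGeneralPosition)
    (hB : B.RowsInGeneralPosition) (hm : m ≤ Fintype.card ι) {h : F} (hH : h ∈ H) (h0 : h ≠ 0)
    (hcard : m < Fintype.card ι → 1 < #H) :
    ∃ e : ι → F, (∀ i, e i ∈ H) ∧ (Aᵀ * diagonal e * B).det ≠ 0 := by
  obtain ⟨τ⟩ := Function.Embedding.nonempty_of_card_le (by simpa : Fintype.card (Fin m) ≤ _)
  have he₀ : (Aᵀ * diagonal (fun i => if i ∈ univ.map τ then h else 0) * B).det ≠ 0 := by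
    rw [transpose_mul_diagonal_indicator_mul, det_smul, det_mul, det_transpose]
    exact mul_ne_zero (pow_ne_zero _ h0) (mul_ne_zero (hA _ τ.injective) (hB _ τ.injective))
  rcases hm.lt_or_eq with hlt | heq
  · exact exists_forall_mem_det_ne_zero_of_det_ne_zero (hcard hlt) he₀
  · have hτ : univ.map τ = univ := eq_univ_of_card _ (by simp [heq])
    exact ⟨_, fun i => by simp [hτ, hH], he₀⟩

end Matrix

section Codes

variable {F : Type*} [Field F]

theorem Submodule.exists_ne_zero_hammingNorm_add_finrank_le {ι : Type*} [DecidableEq F]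
    [Fintype ι] (C : Submodule F (ι → F)) (hC : C ≠ ⊥) :
    ∃ x ∈ C, x ≠ 0 ∧ hammingNorm x + Module.finrank F C ≤ Fintype.card ι + 1 := by
  classical
  have hpos : 0 < Module.finrank F C := Nat.pos_of_ne_zero (by rwa [Ne, Submodule.finrank_eq_zero])
  have hle : Module.finrank F C ≤ Fintype.card ι := by
    simpa using C.finrank_le
  obtain ⟨Z, -, hZ⟩ := exists_subset_card_eq (s := (univ : Finset ι))
    (n := Module.finrank F C - 1) (by rw [card_univ]; omega)
  let restrict : C →ₗ[F] (Z → F) := LinearMap.funLeft F F (Subtype.val : Z → ι) ∘ₗ C.subtype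
  obtain ⟨⟨x, hxC⟩, hx, hx0⟩ := Submodule.exists_mem_ne_zero_of_ne_bot
    (LinearMap.ker_ne_bot_of_finrank_lt (f := restrict) (by
      rw [Module.finrank_fintype_fun_eq_card, Fintype.card_coe, hZ]; omega))
  have hsupp : ({i | x i ≠ 0} : Finset ι) ⊆ Zᶜ := fun i hi => mem_compl.2 fun hiZ =>
    (mem_filter.1 hi).2 (congrFun (LinearMap.mem_ker.1 hx) ⟨i, hiZ⟩)
  refine ⟨x, hxC, fun h => hx0 (by simpa using h), ?_⟩
  have := card_le_card hsupp
  rw [card_compl, hZ] at this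
  unfold hammingNorm
  omega

variable {n m : ℕ} {A : Matrix (Fin n) (Fin m) F}

theorem Matrix.RowsInGeneralPosition.finrank_range (hA : A.RowsInGeneralPosition) (hmn : m ≤ n) :
    Module.finrank F (LinearMap.range A.mulVecLin) = m := by
  rw [LinearMap.finrank_range_of_inj (hA.mulVecLin_injective (by simpa)), Module.finrank_fin_fun]

theorem Matrix.RowsInGeneralPosition.isMinDist_range [DecidableEq F]
    (hA : A.RowsInGeneralPosition) (hm : 0 < m) (hmn : m ≤ n) :
    IsMinDist (LinearMap.range A.mulVecLin) (n - m + 1) := by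
  have hrank := hA.finrank_range hmn
  have hlower : ∀ x ∈ LinearMap.range A.mulVecLin, x ≠ 0 → n - m + 1 ≤ hammingNorm x := by
    rintro _ ⟨c, rfl⟩ hx
    have := hA.card_lt_hammingNorm_add (c := c) (by rintro rfl; simp at hx)
    simp only [Fintype.card_fin, mulVecLin_apply] at this ⊢
    omega
  refine ⟨?_, hlower⟩
  obtain ⟨x, hxC, hx0, hx⟩ := Submodule.exists_ne_zero_hammingNorm_add_finrank_le _
    (Submodule.one_le_finrank_iff.1 (by rw [hrank]; omega))
  have := hlower x hxC hx0
  rw [hrank, Fintype.card_fin] at hx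
  exact ⟨x, hxC, hx0, by omega⟩

theorem isGaloisLCD_range_mulVecLin (p k : ℕ) [Fact p.Prime] [CharP F p]
    (A : Matrix (Fin n) (Fin m) F) (hA : (Aᵀ * A.map (iterateFrobenius F p k)).det ≠ 0) :
    IsGaloisLCD p k (LinearMap.range A.mulVecLin) := by
  rw [IsGaloisLCD, Submodule.eq_bot_iff]
  rintro _ ⟨⟨c, rfl⟩, hdual⟩
  set φ := iterateFrobenius F p k
  have hφ : ∀ x, φ x = x ^ p ^ k := iterateFrobenius_def p k
  have hker : (Aᵀ * A.map φ) *ᵥ (φ ∘ c) = 0 := by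
    ext a
    rw [← mulVec_mulVec]
    have := hdual (A *ᵥ Pi.single a 1) ⟨_, rfl⟩
    simp only [mulVecLin_apply, ← hφ, RingHom.map_mulVec, mulVec_single_one] at this
    simpa [mulVec, dotProduct] using this
  have hc : c = 0 := funext fun b =>
    (map_eq_zero φ).1 (congrFun (eq_zero_of_mulVec_eq_zero hA hker) b)
  simp [hc]

end Codes

theorem Nat.gcd_pow_sub_one_pow_add_one_dvd {p : ℕ} (hp : 0 < p) {k e : ℕ} (hk : k ≤ e) :
    Nat.gcd (p ^ e - 1) (p ^ k + 1) ∣ p ^ (e - k) + 1 := by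
  have hpe : 1 ≤ p ^ e := Nat.one_le_pow _ _ hp
  have key : ((p ^ (e - k) + 1 : ℕ) : ℤ)
      = p ^ (e - k) * ((p ^ k + 1 : ℕ) : ℤ) - ((p ^ e - 1 : ℕ) : ℤ) := by
    rw [Nat.cast_sub hpe]
    push_cast
    rw [mul_add, ← pow_add, Nat.sub_add_cancel hk]
    ring
  have h₁ := Int.natCast_dvd_natCast.2 (Nat.gcd_dvd_right (p ^ e - 1) (p ^ k + 1))
  have h₂ := Int.natCast_dvd_natCast.2 (Nat.gcd_dvd_left (p ^ e - 1) (p ^ k + 1))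
  rw [← Int.natCast_dvd_natCast, key]
  exact _root_.dvd_sub (h₁.mul_left _) h₂

section UnitPowers

variable (F : Type*) [Field F] [Fintype F] [DecidableEq F]

def unitPowers (d : ℕ) : Finset F :=
  univ.image fun u : Fˣ => ((u ^ d : Fˣ) : F)

variable {F}

theorem mem_unitPowers {d : ℕ} {x : F} :
    x ∈ unitPowers F d ↔ ∃ u : Fˣ, ((u ^ d : Fˣ) : F) = x := by
  simp [unitPowers]

theorem card_unitPowers (d : ℕ) :
    #(unitPowers F d) = (Fintype.card F - 1) / Nat.gcd (Fintype.card F - 1) d := by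
  have h : unitPowers F d = (univ.image (powMonoidHom d : Fˣ →* Fˣ)).image Units.val := by
    simp [unitPowers, image_image, Function.comp_def]
  rw [h, card_image_of_injective _ Units.val_injective, ← Set.toFinset_range,
    ← Nat.card_eq_card_toFinset, ← MonoidHom.coe_range]
  exact (IsCyclic.card_powMonoidHom_range Fˣ d).trans (by
    rw [Nat.card_eq_fintype_card, Fintype.card_units])

theorem le_card_unitPowers {p e k t : ℕ} (hp : 0 < p) (hk : k ≤ e) (hF : Fintype.card F = p ^ e)
    (ht : p ^ e - 1 = Nat.gcd (p ^ (e - k) + 1) (p ^ e - 1) * t) :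
    t ≤ #(unitPowers F (p ^ k + 1)) := by
  have hs : 0 < Nat.gcd (p ^ (e - k) + 1) (p ^ e - 1) := Nat.gcd_pos_of_pos_left _ (by omega)
  have hdvd : Nat.gcd (p ^ e - 1) (p ^ k + 1) ∣ Nat.gcd (p ^ (e - k) + 1) (p ^ e - 1) :=
    Nat.dvd_gcd (Nat.gcd_pow_sub_one_pow_add_one_dvd hp hk) (Nat.gcd_dvd_left _ _)
  rw [card_unitPowers, hF, ← Nat.div_eq_of_eq_mul_right hs ht]
  exact Nat.div_le_div_left (Nat.le_of_dvd hs hdvd) (Nat.gcd_pos_of_pos_right _ (by omega))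

end UnitPowers

theorem Matrix.RowsInGeneralPosition.exists_isGaloisLCD_isMinDist (p k : ℕ) [Fact p.Prime]
    {F : Type*} [Field F] [Fintype F] [DecidableEq F] [CharP F p] {n m : ℕ}
    {A : Matrix (Fin n) (Fin m) F} (hA : A.RowsInGeneralPosition) (hm : 0 < m) (hmn : m ≤ n)
    (hcard : m < n → 1 < #(unitPowers F (p ^ k + 1))) :
    ∃ C : Submodule F (Fin n → F),
      IsGaloisLCD p k C ∧ Module.finrank F C = m ∧ IsMinDist C (n - m + 1) := by
  set φ := iterateFrobenius F p k
  obtain ⟨e, he, hdet⟩ := hA.exists_forall_mem_det_ne_zero (hA.map φ) (by simpa)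
    (mem_unitPowers.2 ⟨1, by simp⟩) one_ne_zero (by simpa using hcard)
  choose v hv using fun i => mem_unitPowers.1 (he i)
  have hve : (fun i => (v i : F) * φ (v i)) = e := funext fun i => by
    rw [← hv i, iterateFrobenius_def]
    push_cast
    ring
  have hG := hA.diagonal_mul (d := fun i => (v i : F)) fun i => (v i).ne_zero
  refine ⟨_, isGaloisLCD_range_mulVecLin p k _ ?_, hG.finrank_range hmn, hG.isMinDist_range hm hmn⟩
  rwa [transpose_mul_map_diagonal_mul, hve]

/-- `Option F` models the projective line `F ∪ {∞}`: `some x` is the point `(x : 1)` and `none`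
is `(1 : 0)`. -/
def projLineCoords {F : Type*} [Field F] (a : Option F) : F × F :=
  a.elim (1, 0) fun x => (x, 1)

theorem projLineCoords_cross_ne_zero {F : Type*} [Field F] {a b : Option F} (h : a ≠ b) :
    (projLineCoords b).1 * (projLineCoords a).2 - (projLineCoords a).1 * (projLineCoords b).2
      ≠ 0 := by
  cases a <;> cases b <;> simp_all [projLineCoords, sub_eq_zero, eq_comm]

theorem exists_galoisLCD_MDS_dim_n_sub_l_general
    (p e k s t : ℕ) [Fact p.Prime] (hk : k < e)
    (F : Type*) [Field F] [Fintype F] [DecidableEq F] [CharP F p]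
    (hF : Fintype.card F = p ^ e)
    (hs : s = Nat.gcd (p ^ (e - k) + 1) (p ^ e - 1)) (hst : p ^ e - 1 = s * t)
    {n l : ℕ} (hn1 : n ≤ p ^ e + 1)
    (hl : l < min t n) :
    ∃ C : Submodule F (Fin n → F),
      IsGaloisLCD p k C ∧ Module.finrank F C = n - l ∧ IsMinDist C (l + 1) := by
  subst hs
  have ht := le_card_unitPowers (Fact.out : p.Prime).pos hk.le hF hst
  obtain ⟨P⟩ : Nonempty (Fin n ↪ Option F) :=
    Function.Embedding.nonempty_of_card_le (by
      rw [Fintype.card_fin, Fintype.card_option, hF]; omega)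
  have hA := rowsInGeneralPosition_rectVandermonde (m := n - l)
    fun i j hij => projLineCoords_cross_ne_zero (P.injective.ne hij)
  obtain ⟨C, hC, hdim, hdist⟩ := hA.exists_isGaloisLCD_isMinDist p k (by omega) (by omega)
    fun _ => by omega
  exact ⟨C, hC, hdim, by rwa [show n - (n - l) + 1 = l + 1 by omega] at hdist⟩

/-- Let `q = p^e`, `0 ≤ k < e`, `s = gcd(p^{e-k}+1, p^e-1)`, `p^e - 1 = s t`.  If
`gcd(n, q) = 1`, `n ≤ q + 1` and `0 ≤ l < min{t, n}`, then there exists a `k`-Galois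
LCD MDS code over `F_q` of length `n`, dimension `n - l`, and minimum distance `l + 1`. -/
theorem exists_galoisLCD_MDS_dim_n_sub_l
    (p e k s t : ℕ) [Fact p.Prime] (hk : k < e)
    (F : Type*) [Field F] [Fintype F] [DecidableEq F] [CharP F p]
    (hF : Fintype.card F = p ^ e)
    (hs : s = Nat.gcd (p ^ (e - k) + 1) (p ^ e - 1)) (hst : p ^ e - 1 = s * t)
    {n l : ℕ} (hn : Nat.Coprime n (p ^ e)) (hn1 : n ≤ p ^ e + 1)
    (hl : l < min t n) :
    ∃ C : Submodule F (Fin n → F),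
      IsGaloisLCD p k C ∧ Module.finrank F C = n - l ∧ IsMinDist C (l + 1) :=
  exists_galoisLCD_MDS_dim_n_sub_l_general p e k s t hk F hF hs hst hn1 hl
end

section
/- Let q = p^e be odd, 0 ≤ k < e, and let l be a positive integer such that l divides p^e - 1, l does not divide p^k + 1, 2(p^k + 1) divides p^e - 1, and l ≤ (p^e - 1)/2. Then there exists a k-Galois LCD MDS code over F_q of length 2l, dimension l, and minimum Hamming distance l + 1. -/
open Finset

/-!
The code is a generalized Reed–Solomon code of dimension `l` whose `2l` evaluation points are the
`l`-th roots of unity `μ_l` together with a coset `γ μ_l`, with column multipliers `1` on `μ_l` and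
`v` on `γ μ_l`; such codes are MDS. Pairing the codeword of `f = ∑ u_j X^j` with that of `X^m` in
the `k`-Galois form gives `∑ u_j^{p^k} S(m + j p^k)`, where the power sums
`S(t) = ∑ w_i^{p^k+1} a_i^t` vanish unless `l ∣ t`, in which case `S(t) = l (1 + v^{p^k+1} γ^t)`.
Since `p^k` is invertible modulo `l`, a suitable `m` isolates any single `u_j`, so the code is LCD
as soon as `1 + v^{p^k+1} (γ^l)^c` never vanishes. With `ω` a generator of `F_q^×` and
`q - 1 = l M` (`M ≥ 2`), take `γ = ω^{M/2}`, `v = ω` if `M` is even (then `γ^l = -1`, and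
`l ∤ p^k + 1` rules out `v^{p^k+1} = ±1`), and `γ = ω`, `v = 1` if `M` is odd (then `γ^l` has odd
order, so its powers avoid `-1`).
-/

open Polynomial

lemma hammingNorm_add_card_filter_eq_zero {ι β : Type*} [Fintype ι] [Zero β] [DecidableEq β]
    (x : ι → β) : hammingNorm x + #{i | x i = 0} = Fintype.card ι := by
  rw [hammingNorm, add_comm, Finset.card_filter_add_card_filter_not, card_univ]

lemma natDegree_lt_of_mem_degreeLT {R : Type*} [Semiring R] {l : ℕ} {f : R[X]}
    (hf : f ∈ degreeLT R l) (hf0 : f ≠ 0) : f.natDegree < l :=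
  (natDegree_lt_iff_degree_lt hf0).mpr (mem_degreeLT.mp hf)

section GeneralizedReedSolomon

variable {F : Type*} [Field F] {n : ℕ}

noncomputable def grsEval (a w : Fin n → F) : F[X] →ₗ[F] (Fin n → F) where
  toFun f i := w i * f.eval (a i)
  map_add' f g := by ext i; simp [mul_add]
  map_smul' c f := by ext i; simp [mul_left_comm]

@[simp]
lemma grsEval_apply (a w : Fin n → F) (f : F[X]) (i : Fin n) :
    grsEval a w f i = w i * f.eval (a i) :=
  rfl

noncomputable def grsCode (a w : Fin n → F) (l : ℕ) : Submodule F (Fin n → F) :=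
  (degreeLT F l).map (grsEval a w)

variable {a w : Fin n → F}

lemma card_sub_natDegree_le_hammingNorm_grsEval [DecidableEq F] (ha : Function.Injective a)
    (hw : ∀ i, w i ≠ 0) {f : F[X]} (hf : f ≠ 0) :
    n - f.natDegree ≤ hammingNorm (grsEval a w f) := by
  have hzeros : #{i | grsEval a w f i = 0} ≤ f.natDegree := by
    rw [← card_image_of_injective _ ha]
    refine card_le_degree_of_subset_roots fun x hx => ?_
    obtain ⟨i, hi, rfl⟩ := mem_image.mp (Finset.mem_val.mp hx)
    rw [mem_filter, grsEval_apply, mul_eq_zero] at hi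
    exact (mem_roots hf).mpr (hi.2.resolve_left (hw i))
  have := hammingNorm_add_card_filter_eq_zero (grsEval a w f)
  rw [Fintype.card_fin] at this
  omega

lemma finrank_grsCode (ha : Function.Injective a) (hw : ∀ i, w i ≠ 0) {l : ℕ} (hln : l ≤ n) :
    Module.finrank F (grsCode a w l) = l := by
  classical
  have hinj : Function.Injective ((grsEval a w).comp (degreeLT F l).subtype) := by
    rw [← LinearMap.ker_eq_bot, LinearMap.ker_eq_bot']
    rintro ⟨f, hf⟩ hzero
    by_contra hne
    have hf0 : f ≠ 0 := fun h => hne (Subtype.ext h)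
    have hweight := card_sub_natDegree_le_hammingNorm_grsEval ha hw hf0
    have hdeg := natDegree_lt_of_mem_degreeLT hf hf0
    simp only [LinearMap.comp_apply, Submodule.subtype_apply] at hzero
    rw [hzero, hammingNorm_zero] at hweight
    omega
  rw [grsCode, ← Submodule.range_subtype (degreeLT F l), ← LinearMap.range_comp,
    LinearMap.finrank_range_of_inj hinj, (degreeLTEquiv F l).finrank_eq, Module.finrank_fin_fun]

lemma isMinDist_grsCode [DecidableEq F] (ha : Function.Injective a) (hw : ∀ i, w i ≠ 0)
    {l : ℕ} (hl : 0 < l) (hln : l ≤ n) : IsMinDist (grsCode a w l) (n - l + 1) := by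
  constructor
  · obtain ⟨S, -, hS⟩ := Finset.exists_subset_card_eq (s := (univ : Finset (Fin n)))
      (n := l - 1) (by simp; omega)
    have hzeros : ∀ i, grsEval a w (Lagrange.nodal S a) i = 0 ↔ i ∈ S := by
      intro i
      rw [grsEval_apply, mul_eq_zero, or_iff_right (hw i)]
      refine ⟨fun h => ?_, Lagrange.eval_nodal_at_node⟩
      by_contra hi
      exact Lagrange.eval_nodal_not_at_node (fun j hj hij => hi (by rwa [ha hij])) h
    have hweight : hammingNorm (grsEval a w (Lagrange.nodal S a)) = n - l + 1 := by
      have := hammingNorm_add_card_filter_eq_zero (grsEval a w (Lagrange.nodal S a))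
      simp only [hzeros, filter_mem_eq_inter, univ_inter, hS, Fintype.card_fin] at this
      omega
    refine ⟨_, ⟨_, ?_, rfl⟩, fun h => ?_, hweight⟩
    · rw [SetLike.mem_coe, mem_degreeLT, Lagrange.degree_nodal, hS]
      exact_mod_cast (by omega : l - 1 < l)
    · rw [h, hammingNorm_zero] at hweight
      omega
  · rintro _ ⟨f, hf, rfl⟩ hx
    have hf0 : f ≠ 0 := by rintro rfl; exact hx (map_zero _)
    have := card_sub_natDegree_le_hammingNorm_grsEval ha hw hf0
    have := natDegree_lt_of_mem_degreeLT hf hf0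
    omega

end GeneralizedReedSolomon

lemma Fin.exists_dvd_add_mul {l : ℕ} (j : Fin l) (s : ℕ) : ∃ m : Fin l, l ∣ m + j * s := by
  have hl : 0 < l := j.pos
  refine ⟨⟨j * s * (l - 1) % l, Nat.mod_lt _ hl⟩, (Nat.modEq_zero_iff_dvd).mp ?_⟩
  calc j * s * (l - 1) % l + j * s ≡ j * s * (l - 1) + j * s [MOD l] :=
        (Nat.mod_modEq _ _).add_right _
    _ = l * (j * s) := by rw [← Nat.mul_add_one, Nat.sub_add_cancel hl, mul_comm]
    _ ≡ 0 [MOD l] := (Nat.modEq_zero_iff_dvd).mpr (dvd_mul_right _ _)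

lemma Fin.eq_of_dvd_add_mul {l s : ℕ} (hs : l.Coprime s) {m j j' : Fin l} (h : l ∣ m + j * s)
    (h' : l ∣ m + j' * s) : j = j' := by
  have hmod : (m + j * s : ℕ) ≡ m + j' * s [MOD l] :=
    ((Nat.modEq_zero_iff_dvd).mpr h).trans ((Nat.modEq_zero_iff_dvd).mpr h').symm
  have := (Nat.ModEq.add_left_cancel' _ hmod).cancel_right_of_coprime hs
  exact Fin.ext (Nat.ModEq.eq_of_lt_of_lt this j.isLt j'.isLt)

section GaloisDual

variable {F : Type*} [Field F] {n : ℕ}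

def grsPowerSum (a w : Fin n → F) (s t : ℕ) : F :=
  ∑ i, w i ^ (s + 1) * a i ^ t

variable (p k : ℕ) [Fact p.Prime] [CharP F p] {a w : Fin n → F}

lemma sum_grsEval_X_pow_mul_grsEval_pow {l : ℕ} {f : F[X]} (hf : f ∈ degreeLT F l) (m : ℕ) :
    ∑ i, grsEval a w (X ^ m) i * grsEval a w f i ^ p ^ k =
      ∑ j : Fin l,
        degreeLTEquiv F l ⟨f, hf⟩ j ^ p ^ k * grsPowerSum a w (p ^ k) (m + j * p ^ k) := by
  simp only [grsEval_apply, eval_pow, eval_X, eval_eq_sum_degreeLTEquiv hf, mul_sum,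
    sum_pow_char_pow, grsPowerSum]
  rw [Finset.sum_comm]
  refine sum_congr rfl fun j _ => sum_congr rfl fun i _ => ?_
  ring

theorem isGaloisLCD_grsCode {l : ℕ} (hl : l.Coprime (p ^ k))
    (hS : ∀ t, grsPowerSum a w (p ^ k) t = 0 ↔ ¬ l ∣ t) : IsGaloisLCD p k (grsCode a w l) := by
  rw [IsGaloisLCD, Submodule.eq_bot_iff]
  rintro _ ⟨⟨f, hf, rfl⟩, hdual⟩
  suffices hcoeff : degreeLTEquiv F l ⟨f, hf⟩ = 0 by
    rw [(degreeLTEquiv_eq_zero_iff_eq_zero hf).mp hcoeff, map_zero]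
  funext j₀
  obtain ⟨m, hm⟩ := Fin.exists_dvd_add_mul j₀ (p ^ k)
  have hXm : X ^ (m : ℕ) ∈ degreeLT F l := by
    rw [mem_degreeLT, degree_X_pow]; exact_mod_cast m.isLt
  have hpair := hdual _ ⟨_, hXm, rfl⟩
  rw [sum_grsEval_X_pow_mul_grsEval_pow p k hf, sum_eq_single j₀] at hpair
  · exact pow_eq_zero_iff (pow_ne_zero k (Fact.out : p.Prime).ne_zero) |>.mp
      ((mul_eq_zero.mp hpair).resolve_right ((hS _).not.mpr (not_not.mpr hm)))
  · intro j _ hj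
    rw [(hS _).mpr fun h => hj (Fin.eq_of_dvd_add_mul hl h hm), mul_zero]
  · simp

end GaloisDual

section CosetCode

variable {F : Type*} [Field F] {l : ℕ} {ζ γ v : F}

def cosetPoints (ζ γ : F) (l : ℕ) : Fin (2 * l) → F :=
  fun i => γ ^ (i.divNat : ℕ) * ζ ^ (i.modNat : ℕ)

def cosetWeights (v : F) (l : ℕ) : Fin (2 * l) → F :=
  fun i => v ^ (i.divNat : ℕ)

lemma IsPrimitiveRoot.geom_sum_pow (hζ : IsPrimitiveRoot ζ l) (t : ℕ) :
    ∑ j ∈ range l, (ζ ^ t) ^ j = if l ∣ t then (l : F) else 0 := by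
  split_ifs with ht
  · simp [(hζ.pow_eq_one_iff_dvd t).mpr ht]
  · have hζt : ζ ^ t ≠ 1 := fun h => ht ((hζ.pow_eq_one_iff_dvd t).mp h)
    rw [geom_sum_eq hζt, ← pow_mul, mul_comm, pow_mul, hζ.pow_eq_one, one_pow, sub_self,
      zero_div]

lemma injective_cosetPoints (hζ : IsPrimitiveRoot ζ l) (hγ0 : γ ≠ 0) (hγ : γ ^ l ≠ 1) :
    Function.Injective (cosetPoints ζ γ l) := by
  have hprod : Function.Injective fun x : Fin 2 × Fin l => γ ^ (x.1 : ℕ) * ζ ^ (x.2 : ℕ) := by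
    rintro ⟨b, j⟩ ⟨b', j'⟩ h
    have hb : b = b' := by
      have hpow : ∀ b j : ℕ, (γ ^ b * ζ ^ j) ^ l = (γ ^ l) ^ b := fun b j => by
        rw [mul_pow, pow_right_comm ζ, hζ.pow_eq_one, one_pow, mul_one, pow_right_comm]
      have := congrArg (· ^ l) h
      simp only [hpow] at this
      fin_cases b <;> fin_cases b' <;> simp_all [eq_comm]
    subst hb
    have hj := hζ.pow_inj j.isLt j'.isLt (mul_left_cancel₀ (pow_ne_zero _ hγ0) h)
    rw [Fin.ext hj]
  exact hprod.comp finProdFinEquiv.symm.injective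

lemma grsPowerSum_cosetPoints (hζ : IsPrimitiveRoot ζ l) (s t : ℕ) :
    grsPowerSum (cosetPoints ζ γ l) (cosetWeights v l) s t =
      (1 + v ^ (s + 1) * γ ^ t) * if l ∣ t then (l : F) else 0 := by
  calc grsPowerSum (cosetPoints ζ γ l) (cosetWeights v l) s t
      = ∑ x : Fin 2 × Fin l, (v ^ (x.1 : ℕ)) ^ (s + 1) * (γ ^ (x.1 : ℕ) * ζ ^ (x.2 : ℕ)) ^ t :=
        finProdFinEquiv.symm.sum_comp
          fun x => (v ^ (x.1 : ℕ)) ^ (s + 1) * (γ ^ (x.1 : ℕ) * ζ ^ (x.2 : ℕ)) ^ t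
    _ = _ := by
      rw [Fintype.sum_prod_type, Fin.sum_univ_two, ← hζ.geom_sum_pow t,
        ← Fin.sum_univ_eq_sum_range]
      simp only [Fin.isValue, Fin.val_zero, Fin.val_one, pow_zero, one_pow, pow_one, one_mul,
        mul_pow, ← pow_mul, mul_sum, add_mul, ← sum_add_distrib]
      exact sum_congr rfl fun _ _ => by ring

variable (p k : ℕ) [Fact p.Prime] [CharP F p]

theorem isGaloisLCD_cosetCode (hl : 0 < l) (hζ : IsPrimitiveRoot ζ l)
    (hkey : ∀ c : ℕ, 1 + v ^ (p ^ k + 1) * (γ ^ l) ^ c ≠ 0) :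
    IsGaloisLCD p k (grsCode (cosetPoints ζ γ l) (cosetWeights v l) l) := by
  have : NeZero l := ⟨hl.ne'⟩
  have hlF : (l : F) ≠ 0 := hζ.neZero'.out
  have hpl : ¬ p ∣ l := by rwa [← CharP.cast_eq_zero_iff F p, ← Ne]
  refine isGaloisLCD_grsCode p k ?_ fun t => ?_
  · exact Nat.Coprime.pow_right k ((Nat.Prime.coprime_iff_not_dvd Fact.out).mpr hpl).symm
  rw [grsPowerSum_cosetPoints hζ]
  split_ifs with ht
  · obtain ⟨c, rfl⟩ := ht
    simpa [pow_mul] using And.intro (hkey c) hlF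
  · simp [ht]

end CosetCode

section CosetParameters

variable {F : Type*} [Field F] {l s : ℕ} {ω : F}

lemma exists_cosetParameters_of_even {m : ℕ} (hω : IsPrimitiveRoot ω (l * (2 * m)))
    (hl : 0 < l) (hm : 0 < m) (hs : ¬ l ∣ s) :
    ∃ γ v : F, γ ≠ 0 ∧ γ ^ l ≠ 1 ∧ v ≠ 0 ∧ ∀ c : ℕ, 1 + v ^ s * (γ ^ l) ^ c ≠ 0 := by
  have hN : l * (2 * m) ≠ 0 := by positivity
  have hγl : IsPrimitiveRoot ((ω ^ m) ^ l) 2 := by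
    rw [← pow_mul]; exact hω.pow (by omega) (by ring)
  refine ⟨ω ^ m, ω, pow_ne_zero _ (hω.ne_zero hN), hγl.ne_one one_lt_two, hω.ne_zero hN,
    fun c hc => hs ?_⟩
  rw [hγl.eq_neg_one_of_two_right] at hc
  have hsq : (ω ^ s) ^ 2 = 1 := by
    have hc2 : ((-1 : F) ^ c) ^ 2 = 1 := by rw [← pow_mul, mul_comm, pow_mul]; simp
    linear_combination (ω ^ s * (-1) ^ c - 1) * hc - (ω ^ s) ^ 2 * hc2
  rw [← pow_mul, hω.pow_eq_one_iff_dvd] at hsq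
  have : l * 2 ∣ s * 2 := (mul_dvd_mul_left l (dvd_mul_right 2 m)).trans hsq
  exact Nat.dvd_of_mul_dvd_mul_right two_pos this

lemma exists_cosetParameters_of_odd {M : ℕ} (hω : IsPrimitiveRoot ω (l * M)) (hl : 0 < l)
    (hM : 1 < M) (hModd : Odd M) (hchar : (-1 : F) ≠ 1) :
    ∃ γ v : F, γ ≠ 0 ∧ γ ^ l ≠ 1 ∧ v ≠ 0 ∧ ∀ c : ℕ, 1 + v ^ s * (γ ^ l) ^ c ≠ 0 := by
  have hβ : IsPrimitiveRoot (ω ^ l) M := hω.pow (by positivity) rfl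
  refine ⟨ω, 1, hω.ne_zero (by positivity), hβ.ne_one hM, one_ne_zero, fun c hc => hchar ?_⟩
  rw [one_pow, one_mul, add_comm, add_eq_zero_iff_eq_neg] at hc
  have hc2 : ((ω ^ l) ^ c) ^ 2 = 1 := by rw [hc]; simp
  rw [← pow_mul, hβ.pow_eq_one_iff_dvd] at hc2
  have hMc : M ∣ c := Nat.Coprime.dvd_of_dvd_mul_right hModd.coprime_two_right hc2
  rw [← hc, (hβ.pow_eq_one_iff_dvd c).mpr hMc]

lemma exists_cosetParameters {M : ℕ} (hω : IsPrimitiveRoot ω (l * M)) (hl : 0 < l)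
    (hM : 2 ≤ M) (hs : ¬ l ∣ s) (hchar : (-1 : F) ≠ 1) :
    ∃ γ v : F, γ ≠ 0 ∧ γ ^ l ≠ 1 ∧ v ≠ 0 ∧ ∀ c : ℕ, 1 + v ^ s * (γ ^ l) ^ c ≠ 0 := by
  rcases Nat.even_or_odd M with ⟨m, rfl⟩ | hModd
  · exact exists_cosetParameters_of_even (by rwa [← two_mul] at hω) hl (by omega) hs
  · exact exists_cosetParameters_of_odd hω hl (by omega) hModd hchar

end CosetParameters

theorem exists_galoisLCD_MDS_two_l_general
    (p e k : ℕ) [Fact p.Prime] (hodd : Odd (p ^ e))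
    (F : Type*) [Field F] [Fintype F] [DecidableEq F] [CharP F p]
    (hF : Fintype.card F = p ^ e)
    {l : ℕ} (hl0 : 0 < l) (hl1 : l ∣ p ^ e - 1) (hl2 : ¬ l ∣ p ^ k + 1)
    (hl4 : l ≤ (p ^ e - 1) / 2) :
    ∃ C : Submodule F (Fin (2 * l) → F),
      IsGaloisLCD p k C ∧ Module.finrank F C = l ∧ IsMinDist C (l + 1) := by
  obtain ⟨M, hM⟩ := hl1
  have hM2 : 2 ≤ M := by
    by_contra! h
    interval_cases M <;> omega
  obtain ⟨g, hg⟩ := IsCyclic.exists_ofOrder_eq_natCard (α := Fˣ)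
  have hω : IsPrimitiveRoot (g : F) (l * M) := by
    rw [← hM, ← hF, ← Nat.card_eq_fintype_card, ← Nat.card_units, ← hg]
    exact IsPrimitiveRoot.coe_units_iff.mpr (IsPrimitiveRoot.orderOf g)
  have hchar : (-1 : F) ≠ 1 := Ring.neg_one_ne_one_of_char_ne_two fun h =>
    by rw [FiniteField.even_card_iff_char_two, hF, Nat.odd_iff.mp hodd] at h; exact one_ne_zero h
  obtain ⟨γ, v, hγ0, hγ, hv, hkey⟩ := exists_cosetParameters hω hl0 hM2 hl2 hchar
  have hζ : IsPrimitiveRoot ((g : F) ^ M) l := hω.pow (by positivity) (mul_comm l M)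
  have ha := injective_cosetPoints hζ hγ0 hγ
  have hw : ∀ i, cosetWeights v l i ≠ 0 := fun i => pow_ne_zero _ hv
  refine ⟨grsCode (cosetPoints ((g : F) ^ M) γ l) (cosetWeights v l) l,
    isGaloisLCD_cosetCode p k hl0 hζ hkey, finrank_grsCode ha hw (by omega), ?_⟩
  simpa [two_mul] using isMinDist_grsCode ha hw hl0 (by omega : l ≤ 2 * l)

/-- Let `q = p^e` be odd, `0 ≤ k < e`, and let `l > 0` with `l ∣ p^e - 1`,
`l ∤ p^k + 1`, `2(p^k+1) ∣ p^e - 1` and `l ≤ (p^e-1)/2`.  Then there exists a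
`k`-Galois LCD MDS code over `F_q` with parameters `[2l, l, l+1]_q`. -/
theorem exists_galoisLCD_MDS_two_l
    (p e k : ℕ) [Fact p.Prime] (hk : k < e) (hodd : Odd (p ^ e))
    (F : Type*) [Field F] [Fintype F] [DecidableEq F] [CharP F p]
    (hF : Fintype.card F = p ^ e)
    {l : ℕ} (hl0 : 0 < l) (hl1 : l ∣ p ^ e - 1) (hl2 : ¬ l ∣ p ^ k + 1)
    (hl3 : 2 * (p ^ k + 1) ∣ p ^ e - 1) (hl4 : l ≤ (p ^ e - 1) / 2) :
    ∃ C : Submodule F (Fin (2 * l) → F),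
      IsGaloisLCD p k C ∧ Module.finrank F C = l ∧ IsMinDist C (l + 1) :=
  exists_galoisLCD_MDS_two_l_general p e k hodd F hF hl0 hl1 hl2 hl4
end

section
/- Let q = p^e, 0 ≤ k < e, let n be coprime to q, and let λ ∈ F_q^*. If C is a λ-constacyclic code of length n over F_q, then its k-Galois dual C^{⊥_k} is a λ^{-p^{e-k}}-constacyclic code of length n over F_q. -/
open Finset

/-! The `λ`-shift and the `μ`-shift are adjoint for the form `∑ i, c i * x i ^ N` as soon as
`λ μ^N = 1`, and for `μ = λ⁻¹^{p^{e-k}}`, `N = p^k` this holds because `a^{p^e} = a` in `F_q`.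
Since `λ ≠ 0` the shift is injective, so it maps the finite-dimensional code `C` onto itself:
every `c ∈ C` is the shift of some `d ∈ C`, and then `[c, μ-shift of x]_k = [d, x]_k = 0`. -/

section ConstaShift

variable {R : Type*} [CommRing R] {n : ℕ}

def constaShift (lam : R) : (Fin n → R) →ₗ[R] (Fin n → R) where
  toFun c i := if (i : ℕ) = 0 then lam * c ⟨n - 1, by have := i.isLt; omega⟩
    else c ⟨(i : ℕ) - 1, by have := i.isLt; omega⟩
  map_add' c d := by
    ext i
    by_cases hi : (i : ℕ) = 0 <;> simp [hi, mul_add]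
  map_smul' a c := by
    ext i
    by_cases hi : (i : ℕ) = 0 <;> simp [hi, mul_left_comm]

@[simp]
lemma constaShift_zero (lam : R) {m : ℕ} (c : Fin (m + 1) → R) :
    constaShift lam c 0 = lam * c (Fin.last m) := rfl

@[simp]
lemma constaShift_succ (lam : R) {m : ℕ} (c : Fin (m + 1) → R) (i : Fin m) :
    constaShift lam c i.succ = c i.castSucc := rfl

lemma sum_constaShift_mul_constaShift_pow {lam mu : R} {N : ℕ} (h : lam * mu ^ N = 1)
    (d x : Fin n → R) :
    ∑ i, constaShift lam d i * constaShift mu x i ^ N = ∑ i, d i * x i ^ N := by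
  cases n with
  | zero => simp
  | succ m =>
    rw [Fin.sum_univ_succ, Fin.sum_univ_castSucc (fun i => d i * x i ^ N)]
    simp only [constaShift_zero, constaShift_succ, mul_pow]
    linear_combination d (Fin.last m) * x (Fin.last m) ^ N * h

end ConstaShift

section Field

variable {F : Type*} [Field F] {n : ℕ}

lemma isConstacyclic_iff (lam : F) (C : Submodule F (Fin n → F)) :
    IsConstacyclic lam C ↔ ∀ c ∈ C, constaShift lam c ∈ C := Iff.rfl

lemma constaShift_injective {lam : F} (hlam : lam ≠ 0) :
    Function.Injective (constaShift lam : (Fin n → F) → (Fin n → F)) := by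
  intro c d hcd
  cases n with
  | zero => exact Subsingleton.elim c d
  | succ m =>
    ext j
    induction j using Fin.lastCases with
    | last => simpa [hlam] using congrFun hcd 0
    | cast i => simpa using congrFun hcd i.succ

lemma IsConstacyclic.map_constaShift_eq {lam : F}
    {C : Submodule F (Fin n → F)} (hC : IsConstacyclic lam C) (hlam : lam ≠ 0) :
    C.map (constaShift lam) = C :=
  Submodule.eq_of_le_of_finrank_eq (Submodule.map_le_iff_le_comap.mpr hC)
    (Submodule.equivMapOfInjective _ (constaShift_injective hlam) C).finrank_eq.symm

end Field

theorem galoisDual_constacyclic_general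
    (p e k : ℕ) [Fact p.Prime] (hk : k < e)
    (F : Type*) [Field F] [Fintype F] [CharP F p]
    (hF : Fintype.card F = p ^ e)
    {n : ℕ}
    (lam : F) (hlam : lam ≠ 0)
    (C : Submodule F (Fin n → F)) (hC : IsConstacyclic lam C) :
    IsConstacyclic (lam⁻¹ ^ p ^ (e - k)) (galoisDual p k C) := by
  rw [isConstacyclic_iff]
  intro x hx c hc
  obtain ⟨d, hd, rfl⟩ : c ∈ C.map (constaShift lam) := by rwa [hC.map_constaShift_eq hlam]
  have hpow : lam * (lam⁻¹ ^ p ^ (e - k)) ^ p ^ k = 1 := by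
    rw [← pow_mul, ← pow_add, Nat.sub_add_cancel hk.le, ← hF, FiniteField.pow_card,
      mul_inv_cancel₀ hlam]
  rw [sum_constaShift_mul_constaShift_pow hpow]
  exact hx d hd

/-- If `C` is a `λ`-constacyclic code of length `n` over `F_q` (`q = p^e`, `0 ≤ k < e`,
`gcd(n,q) = 1`), then its `k`-Galois dual `C^{⊥_k}` is a `λ^{-p^{e-k}}`-constacyclic code. -/
theorem galoisDual_constacyclic
    (p e k : ℕ) [Fact p.Prime] (hk : k < e)
    (F : Type*) [Field F] [Fintype F] [CharP F p]
    (hF : Fintype.card F = p ^ e)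
    {n : ℕ} (hn : Nat.Coprime n (p ^ e))
    (lam : F) (hlam : lam ≠ 0)
    (C : Submodule F (Fin n → F)) (hC : IsConstacyclic lam C) :
    IsConstacyclic (lam⁻¹ ^ p ^ (e - k)) (galoisDual p k C) :=
  galoisDual_constacyclic_general p e k hk F hF lam hlam C hC
end

section
/- Let q = p^e with e ≥ 2 and p a prime with p ≡ 1 (mod 4), and take k = 1. Then for every integer l with 1 ≤ l ≤ (p-5)/4 there exists a negacyclic code over F_q that is a 1-Galois LCD MDS code with length (p-1)/2, dimension (p-1)/2 - 2l, and minimum Hamming distance 2l + 1. -/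
open Finset

/-!
Put `n = (p - 1) / 2` and `m = 2l`, and let `ζ ∈ 𝔽_p ⊆ F` be a primitive `2n`-th root of unity,
`w = ζ²` and `a = ζ^(1 - m)`. The code consists of the `x` whose polynomial `∑ xᵢ Xⁱ` vanishes at
the `m` nodes `a wʲ = ζ^(2j + 1 - m)`, `j < m`. These are odd powers of `ζ`, hence roots of
`Xⁿ + 1`, so the code is negacyclic. They are consecutive powers of `w` up to the factor `a`, so a
Vandermonde determinant gives the BCH bound `d ≥ m + 1`, attained by the generator polynomial
`∏ (X - a wʲ)`; Lagrange interpolation shows the `m` conditions are independent.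

For the Galois LCD property, let `x ∈ C ∩ C^{⊥₁}`. The nodes lie in `𝔽_p`, so by Frobenius `xᵖ`
still vanishes at them. The defining set is symmetric (`a² w^(m-1) = 1`), which makes every
remaining node `a wᵗ`, `m ≤ t < n`, give a codeword `((a wᵗ)ⁱ)ᵢ` of `C`: its check sums are
geometric sums of nontrivial `n`-th roots of unity. Orthogonality of `x` to these codewords says
that `xᵖ` vanishes at the remaining nodes too, and vanishing at all `n` distinct nodes `a wᵗ`
forces `xᵖ = 0`.
-/

open Finset Polynomial Function

theorem sum_pow_mul_coeff_eq_eval {R : Type*} [CommSemiring R] {n : ℕ} {P : R[X]}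
    (hP : P.degree < n) (b : R) : ∑ i : Fin n, b ^ (i : ℕ) * P.coeff i = P.eval b := by
  rcases eq_or_ne P 0 with rfl | hP0
  · simp
  rw [eval_eq_sum_range' ((natDegree_lt_iff_degree_lt hP0).mpr hP), ← Fin.sum_univ_eq_sum_range]
  simp_rw [mul_comm]

theorem eq_zero_of_forall_sum_mul_pow_eq_zero_of_hammingNorm_le {K ι : Type*} [Field K]
    [DecidableEq K] [Fintype ι] {v y : ι → K} {m : ℕ} (hv : Injective v)
    (hy : hammingNorm y ≤ m) (hvy : ∀ j < m, ∑ i, y i * v i ^ j = 0) : y = 0 := by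
  set s : Finset ι := {i | y i ≠ 0}
  let e := s.equivFin.symm
  have hsum (j : ℕ) : ∑ t, y (e t) * v (e t) ^ j = ∑ i, y i * v i ^ j := by
    rw [Equiv.sum_comp e fun i : s => y i * v i ^ j, sum_coe_sort s fun i => y i * v i ^ j]
    exact sum_filter_of_ne fun i _ h => left_ne_zero_of_mul h
  have hzero : (fun t => y (e t)) = 0 :=
    Matrix.eq_zero_of_forall_pow_sum_mul_pow_eq_zero (hv.comp (Subtype.val_injective.comp
      e.injective)) fun j => (hsum j).trans (hvy j (j.isLt.trans_le hy))
  funext i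
  by_contra hi
  exact hi (by simpa [e] using congrFun hzero (s.equivFin ⟨i, by simpa [s] using hi⟩))

theorem exists_isPrimitiveRoot_pow_char_eq (p : ℕ) [Fact p.Prime] (F : Type*) [Field F]
    [CharP F p] : ∃ z : F, IsPrimitiveRoot z (p - 1) ∧ z ^ p = z := by
  obtain ⟨g, hg⟩ := IsCyclic.exists_ofOrder_eq_natCard (α := (ZMod p)ˣ)
  rw [Nat.card_eq_fintype_card, ZMod.card_units] at hg
  let f := ZMod.castHom (dvd_refl p) F
  refine ⟨f g, ?_, by rw [← map_pow, ZMod.pow_card]⟩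
  exact (IsPrimitiveRoot.coe_units_iff.mpr (IsPrimitiveRoot.iff_orderOf.mpr hg)).map_of_injective
    f.injective

section

variable {F : Type*} [Field F] {n m : ℕ}

theorem IsPrimitiveRoot.injective_fin_pow {w : F} (hw : IsPrimitiveRoot w n) (hmn : m ≤ n) :
    Injective fun j : Fin m => w ^ (j : ℕ) := fun i j hij =>
  Fin.ext (hw.pow_inj (i.isLt.trans_le hmn) (j.isLt.trans_le hmn) hij)

theorem IsPrimitiveRoot.injective_fin_mul_pow {a w : F} (hw : IsPrimitiveRoot w n) (ha : a ≠ 0)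
    (hmn : m ≤ n) : Injective fun j : Fin m => a * w ^ (j : ℕ) :=
  (mul_right_injective₀ ha).comp (hw.injective_fin_pow hmn)

def evalNodes (n : ℕ) (B : Fin m → F) : (Fin n → F) →ₗ[F] Fin m → F :=
  (Matrix.of fun j (i : Fin n) => B j ^ (i : ℕ)).mulVecLin

@[simp]
theorem evalNodes_apply (B : Fin m → F) (x : Fin n → F) (j : Fin m) :
    evalNodes n B x j = ∑ i : Fin n, B j ^ (i : ℕ) * x i :=
  rfl

def vanishingCode (n : ℕ) (B : Fin m → F) : Submodule F (Fin n → F) :=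
  LinearMap.ker (evalNodes n B)

theorem mem_vanishingCode {B : Fin m → F} {x : Fin n → F} :
    x ∈ vanishingCode n B ↔ ∀ j, ∑ i : Fin n, B j ^ (i : ℕ) * x i = 0 := by
  simp [vanishingCode, funext_iff]

theorem isConstacyclic_vanishingCode {lam : F} {B : Fin m → F} (hB : ∀ j, B j ^ n = lam) :
    IsConstacyclic lam (vanishingCode n B) := by
  intro c hc
  rw [mem_vanishingCode] at hc ⊢
  intro j
  cases n with
  | zero => simp
  | succ k =>
    have hcj := hc j
    rw [Fin.sum_univ_castSucc] at hcj
    simp only [Fin.val_castSucc, Fin.val_last] at hcj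
    rw [Fin.sum_univ_succ]
    simp only [Fin.val_zero, Fin.val_succ, pow_zero, one_mul, if_true, add_tsub_cancel_right,
      Nat.add_one_ne_zero, if_false]
    change lam * c (Fin.last k) + ∑ i : Fin k, B j ^ ((i : ℕ) + 1) * c i.castSucc = 0
    simp_rw [pow_succ, mul_right_comm _ (B j), ← sum_mul]
    linear_combination B j * hcj - c (Fin.last k) * hB j

theorem evalNodes_surjective {B : Fin m → F} (hB : Injective B) (hmn : m ≤ n) :
    Surjective (evalNodes n B) := by
  intro d
  set P := Lagrange.interpolate univ B d
  have hP : P.degree < n :=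
    (Lagrange.degree_interpolate_lt _ hB.injOn).trans_le (by simpa using hmn)
  refine ⟨fun i => P.coeff i, funext fun j => ?_⟩
  rw [evalNodes_apply, sum_pow_mul_coeff_eq_eval hP,
    Lagrange.eval_interpolate_at_node _ hB.injOn (mem_univ j)]

theorem finrank_vanishingCode {B : Fin m → F} (hB : Injective B) (hmn : m ≤ n) :
    Module.finrank F (vanishingCode n B) = n - m := by
  have h := (evalNodes n B).finrank_range_add_finrank_ker
  rw [LinearMap.range_eq_top.mpr (evalNodes_surjective hB hmn), finrank_top,
    Module.finrank_fin_fun, Module.finrank_fin_fun] at h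
  rw [vanishingCode]
  omega

theorem exists_mem_vanishingCode_hammingNorm_le [DecidableEq F] (B : Fin m → F) (hmn : m < n) :
    ∃ x ∈ vanishingCode n B, x ≠ 0 ∧ hammingNorm x ≤ m + 1 := by
  set g : F[X] := ∏ j, (X - C (B j))
  have hg : g.Monic := monic_prod_of_monic _ _ fun j _ => monic_X_sub_C (B j)
  have hdeg : g.natDegree = m := by
    simp [g, natDegree_prod_of_monic _ _ fun j _ => monic_X_sub_C (B j)]
  have hgn : g.degree < n := by
    rw [degree_eq_natDegree hg.ne_zero, hdeg]
    exact_mod_cast hmn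
  refine ⟨fun i => g.coeff i, ?_, fun h => ?_, ?_⟩
  · rw [mem_vanishingCode]
    intro j
    rw [sum_pow_mul_coeff_eq_eval hgn, eval_prod]
    exact prod_eq_zero (mem_univ j) (by simp)
  · simpa [← hdeg, hg.coeff_natDegree] using congrFun h ⟨m, hmn⟩
  · calc hammingNorm (fun i : Fin n => g.coeff i) ≤ #(Iic (⟨m, hmn⟩ : Fin n)) :=
          card_le_card fun i hi => by
            simpa [← hdeg, Fin.le_def] using le_natDegree_of_ne_zero (mem_filter.mp hi).2
      _ = m + 1 := Fin.card_Iic _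

theorem isGaloisLCD_vanishingCode {p k : ℕ} [Fact p.Prime] [CharP F p] {β : ℕ → F}
    (hβ : Injective fun t : Fin n => β t) (hβp : ∀ t < n, β t ^ p ^ k = β t)
    (hdual : ∀ t, m ≤ t → t < n →
      (fun i : Fin n => β t ^ (i : ℕ)) ∈ vanishingCode n fun j : Fin m => β j) :
    IsGaloisLCD p k (vanishingCode n fun j : Fin m => β j) := by
  rw [IsGaloisLCD, Submodule.eq_bot_iff]
  intro x hx
  obtain ⟨hxC, hxD⟩ := Submodule.mem_inf.mp hx
  have hq : p ^ k ≠ 0 := pow_ne_zero _ (Fact.out : p.Prime).ne_zero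
  have hfrob : (fun i => x i ^ p ^ k) = 0 := by
    refine Matrix.eq_zero_of_forall_index_sum_pow_mul_eq_zero hβ fun t => ?_
    by_cases ht : (t : ℕ) < m
    · calc ∑ i : Fin n, β t ^ (i : ℕ) * x i ^ p ^ k
            = ∑ i : Fin n, (β t ^ (i : ℕ) * x i) ^ p ^ k := sum_congr rfl fun i _ => by
              rw [mul_pow, ← pow_mul, mul_comm (i : ℕ), pow_mul, hβp t t.isLt]
        _ = (∑ i : Fin n, β t ^ (i : ℕ) * x i) ^ p ^ k := (sum_pow_char_pow p k _ _).symm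
        _ = 0 := by rw [mem_vanishingCode.mp hxC ⟨t, ht⟩, zero_pow hq]
    · exact hxD _ (hdual t (not_lt.mp ht) t.isLt)
  funext i
  exact (pow_eq_zero_iff hq).mp (congrFun hfrob i)

def bchCode (n m : ℕ) (a w : F) : Submodule F (Fin n → F) :=
  vanishingCode n fun j : Fin m => a * w ^ (j : ℕ)

variable {a w : F}

theorem isConstacyclic_bchCode (hw : w ^ n = 1) : IsConstacyclic (a ^ n) (bchCode n m a w) :=
  isConstacyclic_vanishingCode fun j => by
    rw [mul_pow, ← pow_mul, mul_comm (j : ℕ), pow_mul, hw, one_pow, mul_one]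

theorem finrank_bchCode (hw : IsPrimitiveRoot w n) (ha : a ≠ 0) (hmn : m ≤ n) :
    Module.finrank F (bchCode n m a w) = n - m :=
  finrank_vanishingCode (hw.injective_fin_mul_pow ha hmn) hmn

theorem lt_hammingNorm_of_mem_bchCode [DecidableEq F] (hw : IsPrimitiveRoot w n) (ha : a ≠ 0)
    {x : Fin n → F} (hx : x ∈ bchCode n m a w) (hx0 : x ≠ 0) : m < hammingNorm x := by
  by_contra! hle
  have hnorm : hammingNorm (fun i : Fin n => a ^ (i : ℕ) * x i) = hammingNorm x := by
    simp [hammingNorm, ha]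
  have hzero := eq_zero_of_forall_sum_mul_pow_eq_zero_of_hammingNorm_le
    (hw.injective_fin_pow le_rfl) (hnorm.trans_le hle) fun j hj => by
      rw [← mem_vanishingCode.mp hx ⟨j, hj⟩]
      exact sum_congr rfl fun i _ => by ring
  exact hx0 (funext fun i => by simpa [ha] using congrFun hzero i)

theorem isMinDist_bchCode [DecidableEq F] (hw : IsPrimitiveRoot w n) (ha : a ≠ 0) (hmn : m < n) :
    IsMinDist (bchCode n m a w) (m + 1) := by
  obtain ⟨x, hx, hx0, hle⟩ :=
    exists_mem_vanishingCode_hammingNorm_le (fun j : Fin m => a * w ^ (j : ℕ)) hmn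
  exact ⟨⟨x, hx, hx0, hle.antisymm (lt_hammingNorm_of_mem_bchCode hw ha hx hx0)⟩,
    fun y hy hy0 => lt_hammingNorm_of_mem_bchCode hw ha hy hy0⟩

theorem pow_mem_bchCode (hw : IsPrimitiveRoot w n) (ha : a ^ 2 * w ^ (m - 1) = 1) {t : ℕ}
    (hmt : m ≤ t) (htn : t < n) : (fun i : Fin n => (a * w ^ t) ^ (i : ℕ)) ∈ bchCode n m a w := by
  rw [bchCode, mem_vanishingCode]
  intro j
  set u := w ^ (t + j + 1 - m)
  have hu : a * w ^ (j : ℕ) * (a * w ^ t) = u := by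
    rw [show a * w ^ (j : ℕ) * (a * w ^ t) = a ^ 2 * w ^ (j + t) by ring,
      show (j : ℕ) + t = (m - 1) + (t + j + 1 - m) by omega, pow_add, ← mul_assoc, ha, one_mul]
  have hu1 : u ≠ 1 := by
    rw [Ne, hw.pow_eq_one_iff_dvd]
    intro h
    have := Nat.le_of_dvd (by omega) h
    omega
  have hun : u ^ n = 1 := by rw [← pow_mul, mul_comm, pow_mul, hw.pow_eq_one, one_pow]
  simp_rw [← mul_pow, hu]
  rw [Fin.sum_univ_eq_sum_range (u ^ ·) n, geom_sum_eq hu1, hun, sub_self, zero_div]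

theorem isGaloisLCD_bchCode {p k : ℕ} [Fact p.Prime] [CharP F p] (hw : IsPrimitiveRoot w n)
    (ha : a ^ 2 * w ^ (m - 1) = 1) (hap : a ^ p ^ k = a) (hwp : w ^ p ^ k = w) :
    IsGaloisLCD p k (bchCode n m a w) := by
  have ha0 : a ≠ 0 := by rintro rfl; simp at ha
  exact isGaloisLCD_vanishingCode (β := fun t => a * w ^ t)
    (hw.injective_fin_mul_pow ha0 le_rfl)
    (fun t _ => by rw [mul_pow, hap, ← pow_mul, mul_comm t, pow_mul, hwp])
    fun t hmt htn => pow_mem_bchCode hw ha hmt htn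

end

theorem exists_negacyclic_galoisLCD_MDS_one_mod_four_general
    (p : ℕ) [Fact p.Prime] (hp : p % 4 = 1)
    (F : Type*) [Field F] [DecidableEq F] [CharP F p]
    {l : ℕ} (hl1 : 1 ≤ l) (hl2 : l ≤ (p - 5) / 4) :
    ∃ C : Submodule F (Fin ((p - 1) / 2) → F),
      IsConstacyclic (-1 : F) C ∧ IsGaloisLCD p 1 C ∧
      Module.finrank F C = (p - 1) / 2 - 2 * l ∧ IsMinDist C (2 * l + 1) := by
  set n := (p - 1) / 2 with hn
  obtain ⟨z, hz, hzp⟩ := exists_isPrimitiveRoot_pow_char_eq p F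
  rw [show p - 1 = 2 * n by omega] at hz
  have hw : IsPrimitiveRoot (z ^ 2) n := hz.pow (by omega) rfl
  have hzn : z ^ n = -1 := (hz.pow (by omega) (mul_comm 2 n)).eq_neg_one_of_two_right
  have hfix (e : ℕ) : (z ^ e) ^ p ^ 1 = z ^ e := by rw [pow_one, ← pow_mul, mul_comm, pow_mul, hzp]
  -- `a = ζ^(1 - 2l)`, with the exponent shifted by the order `2n` of `ζ`
  set a := z ^ (2 * n + 1 - 2 * l)
  have ha : a ^ 2 * (z ^ 2) ^ (2 * l - 1) = 1 := by
    rw [← pow_mul, ← pow_mul, ← pow_add, show (2 * n + 1 - 2 * l) * 2 + 2 * (2 * l - 1) = 2 * n * 2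
      by omega, pow_mul, hz.pow_eq_one, one_pow]
  have ha0 : a ≠ 0 := pow_ne_zero _ (hz.ne_zero (by omega))
  have han : a ^ n = -1 := by
    rw [← pow_mul, mul_comm, pow_mul, hzn, Odd.neg_one_pow ⟨n - l, by omega⟩]
  refine ⟨bchCode n (2 * l) a (z ^ 2), han ▸ isConstacyclic_bchCode hw.pow_eq_one,
    isGaloisLCD_bchCode hw ha (hfix _) (hfix _), finrank_bchCode hw ha0 (by omega),
    isMinDist_bchCode hw ha0 (by omega)⟩

/-- Let `q = p^e` with `e ≥ 2` and `p ≡ 1 (mod 4)` a prime, and take `k = 1`.  For every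
`1 ≤ l ≤ (p-5)/4` there exists a negacyclic code over `F_q` that is a `1`-Galois LCD MDS
code of length `(p-1)/2`, dimension `(p-1)/2 - 2l` and minimum distance `2l + 1`. -/
theorem exists_negacyclic_galoisLCD_MDS_one_mod_four
    (p e : ℕ) [Fact p.Prime] (he : 2 ≤ e) (hp : p % 4 = 1)
    (F : Type*) [Field F] [Fintype F] [DecidableEq F] [CharP F p]
    (hF : Fintype.card F = p ^ e)
    {l : ℕ} (hl1 : 1 ≤ l) (hl2 : l ≤ (p - 5) / 4) :
    ∃ C : Submodule F (Fin ((p - 1) / 2) → F),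
      IsConstacyclic (-1 : F) C ∧ IsGaloisLCD p 1 C ∧
      Module.finrank F C = (p - 1) / 2 - 2 * l ∧ IsMinDist C (2 * l + 1) :=
  exists_negacyclic_galoisLCD_MDS_one_mod_four_general p hp F hl1 hl2
end
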